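/- arXiv:1607.00077 — 5 statements merged into one kernel-verified Lean document; each statement's English description precedes it below -/
import Mathlib

section
/- Let Γ be a symmetric positive definite d×d real matrix satisfying Condition (C): for each k ∈ {1,…,d}, the matrix Γ^{(k)} with entries Γ^{(k)}_{ij} = ((λ_i+λ_j)/2)(Γ_ij + Γ_kk − Γ_ik − Γ_jk) is positive definite on the hyperplane e_k^⊥. Then there exists z > 0 such that for all x with Σ_i x_i = 0 and all ρ ∈ D, x^* Γ A(ρ) x ≥ z x^* x, where A(ρ) = (1/2)(I_d + M(ρ)). -/
open Matrix Finset

/-- The matrix `M(ρ)` from the paper. -/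
noncomputable def Mmat {d : ℕ} (lam : Fin d → ℝ) (ρ : Fin d → ℝ) :
    Matrix (Fin d) (Fin d) ℝ :=
  Matrix.of fun i j =>
    if i = j then
      ((∑ l ∈ Finset.univ.erase i, lam l * ρ l) *
        (∑ l ∈ Finset.univ.erase i, (lam i - lam l) * ρ l)) / (∑ l, lam l * ρ l) ^ 2
    else
      (lam i * ρ i * (∑ l ∈ Finset.univ.erase j, (lam l - lam j) * ρ l)) /
        (∑ l, lam l * ρ l) ^ 2

/-- The matrix `A(ρ) = (1/2)(I + M(ρ))`. -/
noncomputable def Amat {d : ℕ} (lam : Fin d → ℝ) (ρ : Fin d → ℝ) :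
    Matrix (Fin d) (Fin d) ℝ :=
  (1 / 2 : ℝ) • ((1 : Matrix (Fin d) (Fin d) ℝ) + Mmat lam ρ)

/-- The domain `D = (ℝ₊)^d \ {0}`. -/
def Dset (d : ℕ) : Set (Fin d → ℝ) := {ρ | (∀ i, 0 ≤ ρ i) ∧ ρ ≠ 0}

/-- The matrix `Γ^{(k)}` with entries `((λ_i+λ_j)/2)(Γ_ij + Γ_kk − Γ_ik − Γ_jk)`. -/
noncomputable def GammaK {d : ℕ} (lam : Fin d → ℝ) (Γ : Matrix (Fin d) (Fin d) ℝ)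
    (k : Fin d) : Matrix (Fin d) (Fin d) ℝ :=
  Matrix.of fun i j => (lam i + lam j) / 2 * (Γ i j + Γ k k - Γ i k - Γ j k)

/-- Condition (C): `Γ` is symmetric positive definite and each `Γ^{(k)}` is positive
definite on the hyperplane `e_k^⊥ = {x | x k = 0}`. -/
def CondC {d : ℕ} (lam : Fin d → ℝ) (Γ : Matrix (Fin d) (Fin d) ℝ) : Prop :=
  Γ.PosDef ∧ ∀ k : Fin d, ∀ x : Fin d → ℝ, x k = 0 → x ≠ 0 →
    0 < x ⬝ᵥ (GammaK lam Γ k).mulVec x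

variable {d : ℕ} (lam ρ x : Fin d → ℝ)

lemma Mentry (j m : Fin d) :
    Mmat lam ρ j m =
      (lam j * ρ j * ((∑ l, lam l * ρ l) - lam m * (∑ l, ρ l))
        - (if j = m then (∑ l, lam l * ρ l) * ((∑ l, lam l * ρ l) - lam m * (∑ l, ρ l)) else 0))
        / (∑ l, lam l * ρ l) ^ 2 := by
  set s := ∑ l, lam l * ρ l with hsdef
  have h1 : ∀ i : Fin d, ∑ l ∈ Finset.univ.erase i, lam l * ρ l = s - lam i * ρ i := by
    intro i
    rw [Finset.sum_erase_eq_sub (Finset.mem_univ i)]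
  have h2 : ∀ i : Fin d, ∑ l ∈ Finset.univ.erase i, (lam i - lam l) * ρ l
      = lam i * (∑ l, ρ l) - s := by
    intro i
    rw [Finset.sum_erase_eq_sub (Finset.mem_univ i)]
    simp [sub_mul, Finset.sum_sub_distrib, Finset.mul_sum]
    exact hsdef.symm
  have h3 : ∀ i : Fin d, ∑ l ∈ Finset.univ.erase i, (lam l - lam i) * ρ l
      = s - lam i * (∑ l, ρ l) := by
    intro i
    rw [Finset.sum_erase_eq_sub (Finset.mem_univ i)]
    simp [sub_mul, Finset.sum_sub_distrib, Finset.mul_sum]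
    exact hsdef.symm
  unfold Mmat
  by_cases h : j = m
  · subst h
    rw [Matrix.of_apply, if_pos rfl, if_pos rfl, h1, h2]
    ring
  · rw [Matrix.of_apply, if_neg h, if_neg h, h3]
    ring

lemma Avec (hs : (∑ l, lam l * ρ l) ≠ 0) (hx : (∑ i, x i) = 0) :
    (Amat lam ρ).mulVec x = fun j =>
      (∑ l, ρ l) * (lam j * ((∑ l, lam l * ρ l) * x j - (∑ l, lam l * x l) * ρ j))
        / (2 * (∑ l, lam l * ρ l) ^ 2) := by
  funext j
  set s := ∑ l, lam l * ρ l with hsdef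
  set r := ∑ l, ρ l with hrdef
  set a := ∑ l, lam l * x l with hadef
  have hMv : ∑ m, Mmat lam ρ j m * x m
      = (lam j * ρ j * (∑ m, (s - lam m * r) * x m) - s * (s - lam j * r) * x j) / s ^ 2 := by
    have : ∀ m, Mmat lam ρ j m * x m
        = (lam j * ρ j * ((s - lam m * r) * x m)
          - (if j = m then s * ((s - lam m * r) * x m) else 0)) / s ^ 2 := by
      intro m
      rw [Mentry lam ρ j m]
      by_cases h : j = m <;> simp [h] <;> ring
    rw [Finset.sum_congr rfl fun m _ => this m]
    rw [← Finset.sum_div]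
    congr 1
    rw [Finset.sum_sub_distrib, ← Finset.mul_sum, Finset.sum_ite_eq (Finset.univ) j
      (fun m => s * ((s - lam m * r) * x m))]
    simp
    ring
  have hsum : ∑ m, (s - lam m * r) * x m = - (r * a) := by
    have : ∀ m, (s - lam m * r) * x m = s * x m - r * (lam m * x m) := by intro m; ring
    rw [Finset.sum_congr rfl fun m _ => this m, Finset.sum_sub_distrib, ← Finset.mul_sum,
      ← Finset.mul_sum, hx]
    ring
  have key : (Amat lam ρ).mulVec x j = 1/2 * x j + 1/2 * ∑ m, Mmat lam ρ j m * x m := by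
    simp only [Amat, Matrix.mulVec, dotProduct, Matrix.smul_apply, Matrix.add_apply,
      Matrix.one_apply, smul_eq_mul, mul_add, add_mul, mul_ite, ite_mul, mul_one, mul_zero,
      zero_mul, one_mul]
    rw [Finset.sum_add_distrib, Finset.sum_ite_eq, if_pos (Finset.mem_univ j)]
    congr 1
    rw [Finset.mul_sum]
    exact Finset.sum_congr rfl fun m _ => by ring
  rw [key, hMv, hsum]
  field_simp
  ring

lemma Qval (Γ : Matrix (Fin d) (Fin d) ℝ) (hsym : ∀ i j, Γ i j = Γ j i)
    (hx : (∑ i, x i) = 0) (k : Fin d) :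
    x ⬝ᵥ (GammaK lam Γ k).mulVec x
      = (∑ i, ∑ j, lam i * x i * (x j * Γ i j))
        - (∑ l, lam l * x l) * (∑ j, Γ k j * x j) := by
  have step1 : x ⬝ᵥ (GammaK lam Γ k).mulVec x
      = ∑ i, ∑ j, x i * ((lam i + lam j) / 2 * (Γ i j + Γ k k - Γ i k - Γ j k) * x j) := by
    simp only [dotProduct, Matrix.mulVec, GammaK, Matrix.of_apply]
    exact Finset.sum_congr rfl fun i _ => by rw [Finset.mul_sum]
  rw [step1]
  have swap : ∑ i, ∑ j, lam j * (x i * x j * (Γ i j + Γ k k - Γ i k - Γ j k))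
      = ∑ i, ∑ j, lam i * (x i * x j * (Γ i j + Γ k k - Γ i k - Γ j k)) := by
    rw [Finset.sum_comm]
    refine Finset.sum_congr rfl fun i _ => Finset.sum_congr rfl fun j _ => ?_
    rw [hsym i j, hsym i k, hsym j k]
    ring
  have step2 : ∑ i, ∑ j, x i * ((lam i + lam j) / 2 * (Γ i j + Γ k k - Γ i k - Γ j k) * x j)
      = ∑ i, ∑ j, lam i * (x i * x j * (Γ i j + Γ k k - Γ i k - Γ j k)) := by
    have : ∀ i j : Fin d, x i * ((lam i + lam j) / 2 * (Γ i j + Γ k k - Γ i k - Γ j k) * x j)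
        = (lam i * (x i * x j * (Γ i j + Γ k k - Γ i k - Γ j k))
          + lam j * (x i * x j * (Γ i j + Γ k k - Γ i k - Γ j k))) / 2 := by
      intro i j; ring
    rw [Finset.sum_congr rfl fun i _ => Finset.sum_congr rfl fun j _ => this i j]
    simp only [← Finset.sum_div, Finset.sum_add_distrib]
    rw [swap]
    ring
  rw [step2]
  have expand : ∀ i, ∑ j, lam i * (x i * x j * (Γ i j + Γ k k - Γ i k - Γ j k))
      = (∑ j, lam i * x i * (x j * Γ i j)) - lam i * x i * (∑ j, Γ k j * x j) := by
    intro i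
    have e1 : ∀ j, lam i * (x i * x j * (Γ i j + Γ k k - Γ i k - Γ j k))
        = lam i * x i * (x j * Γ i j) + (lam i * x i * (Γ k k - Γ i k)) * x j
          - lam i * x i * (Γ j k * x j) := by intro j; ring
    rw [Finset.sum_congr rfl fun j _ => e1 j, Finset.sum_sub_distrib, Finset.sum_add_distrib,
      ← Finset.mul_sum, ← Finset.mul_sum, ← Finset.mul_sum, hx]
    have h4 : ∑ j, Γ j k * x j = ∑ j, Γ k j * x j :=
      Finset.sum_congr rfl fun j _ => by rw [hsym j k]
    rw [mul_zero, add_zero, h4]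
  rw [Finset.sum_congr rfl fun i _ => expand i, Finset.sum_sub_distrib, ← Finset.sum_mul]

lemma dsum_mul_left (c : ℝ) (f : Fin d → Fin d → ℝ) :
    ∑ i, ∑ j, c * f i j = c * ∑ i, ∑ j, f i j := by
  simp [Finset.mul_sum]

lemma mainId (Γ : Matrix (Fin d) (Fin d) ℝ) (hsym : ∀ i j, Γ i j = Γ j i)
    (hs : (∑ l, lam l * ρ l) ≠ 0) (hx : (∑ i, x i) = 0) :
    x ⬝ᵥ (Γ * Amat lam ρ).mulVec x
      = (∑ l, ρ l) / (2 * (∑ l, lam l * ρ l) ^ 2)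
        * ∑ k, lam k * ρ k * (x ⬝ᵥ (GammaK lam Γ k).mulVec x) := by
  set s := ∑ l, lam l * ρ l with hsdef
  set r := ∑ l, ρ l with hrdef
  set a := ∑ l, lam l * x l with hadef
  have c0swap : ∑ i, ∑ j, x i * Γ i j * (lam j * x j)
      = ∑ i, ∑ j, lam i * x i * (x j * Γ i j) := by
    rw [Finset.sum_comm]
    refine Finset.sum_congr rfl fun i _ => Finset.sum_congr rfl fun j _ => ?_
    rw [hsym j i]; ring
  have bswap : ∑ i, ∑ j, x i * Γ i j * (lam j * ρ j)
      = ∑ k, lam k * ρ k * (∑ j, Γ k j * x j) := by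
    rw [Finset.sum_comm]
    refine Finset.sum_congr rfl fun k _ => ?_
    rw [Finset.mul_sum]
    refine Finset.sum_congr rfl fun i _ => ?_
    rw [hsym i k]; ring
  have lhs_eq : x ⬝ᵥ (Γ * Amat lam ρ).mulVec x
      = ∑ i, ∑ j, (r / (2 * s ^ 2)) * (s * (x i * Γ i j * (lam j * x j))
          - a * (x i * Γ i j * (lam j * ρ j))) := by
    rw [← Matrix.mulVec_mulVec, Avec lam ρ x hs hx]
    simp only [dotProduct, Matrix.mulVec]
    refine Finset.sum_congr rfl fun i _ => ?_
    rw [Finset.mul_sum]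
    refine Finset.sum_congr rfl fun j _ => ?_
    simp only [← hsdef, ← hrdef, ← hadef]
    field_simp
  rw [lhs_eq]
  have rhs_eq : ∑ k, lam k * ρ k * (x ⬝ᵥ (GammaK lam Γ k).mulVec x)
      = s * (∑ i, ∑ j, lam i * x i * (x j * Γ i j))
        - a * ∑ k, lam k * ρ k * (∑ j, Γ k j * x j) := by
    rw [Finset.sum_congr rfl fun k _ => by rw [Qval lam x Γ hsym hx k]]
    have e : ∀ k : Fin d, lam k * ρ k
          * ((∑ i, ∑ j, lam i * x i * (x j * Γ i j)) - a * (∑ j, Γ k j * x j))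
        = (∑ i, ∑ j, lam i * x i * (x j * Γ i j)) * (lam k * ρ k)
          - a * (lam k * ρ k * (∑ j, Γ k j * x j)) := fun k => by ring
    rw [Finset.sum_congr rfl fun k _ => e k, Finset.sum_sub_distrib, ← Finset.mul_sum,
      ← Finset.mul_sum, ← hsdef]
    ring
  rw [rhs_eq, ← c0swap, ← bswap]
  simp only [mul_sub, Finset.sum_sub_distrib, dsum_mul_left]

lemma quadExpand (G : Matrix (Fin d) (Fin d) ℝ) :
    x ⬝ᵥ G.mulVec x = ∑ i, ∑ j, x i * (G i j * x j) := by
  simp [dotProduct, Matrix.mulVec, Finset.mul_sum]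

lemma Qpos (Γ : Matrix (Fin d) (Fin d) ℝ) (hΓ : CondC lam Γ)
    (hx : (∑ i, x i) = 0) (hx0 : x ≠ 0) (k : Fin d) :
    0 < x ⬝ᵥ (GammaK lam Γ k).mulVec x := by
  have hsym : ∀ i j, Γ i j = Γ j i := fun i j => by
    have := congrFun (congrFun hΓ.1.isHermitian i) j
    simpa [Matrix.conjTranspose_apply] using this.symm
  set y := Function.update x k 0 with hy
  have hyk : y k = 0 := Function.update_self k 0 x
  have hy0 : y ≠ 0 := by
    have hex : ∃ i, i ≠ k ∧ x i ≠ 0 := by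
      by_contra h
      push_neg at h
      apply hx0
      funext i
      by_cases hik : i = k
      · subst hik
        have : ∑ i, x i = x i := by
          apply Finset.sum_eq_single
          · intro b _ hb; exact h b hb
          · intro hb; exact absurd (Finset.mem_univ i) hb
        rw [← this, hx]; rfl
      · exact h i hik
    obtain ⟨i, hik, hxi⟩ := hex
    intro h
    apply hxi
    have h2 : y i = 0 := by rw [h]; rfl
    rw [hy, Function.update_of_ne hik] at h2
    exact h2
  have hGrow : ∀ j, GammaK lam Γ k k j = 0 := by
    intro j
    simp only [GammaK, Matrix.of_apply]
    rw [hsym j k]; ring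
  have hGcol : ∀ i, GammaK lam Γ k i k = 0 := by
    intro i
    simp only [GammaK, Matrix.of_apply]
    ring
  have hform : x ⬝ᵥ (GammaK lam Γ k).mulVec x = y ⬝ᵥ (GammaK lam Γ k).mulVec y := by
    rw [quadExpand, quadExpand]
    refine Finset.sum_congr rfl fun i _ => Finset.sum_congr rfl fun j _ => ?_
    by_cases hik : i = k
    · subst hik; rw [hGrow j]; ring
    · by_cases hjk : j = k
      · subst hjk; rw [hGcol i]; ring
      · rw [hy, Function.update_of_ne hik, Function.update_of_ne hjk]
  rw [hform]
  exact hΓ.2 k y hyk hy0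

noncomputable def Pfun {d : ℕ} (lam : Fin d → ℝ) (Γ : Matrix (Fin d) (Fin d) ℝ)
    (p : (Fin d → ℝ) × (Fin d → ℝ)) : ℝ :=
  (∑ l, p.2 l) / 2 * ∑ k, lam k * p.2 k * (p.1 ⬝ᵥ (GammaK lam Γ k).mulVec p.1)

def Kset {d : ℕ} (lam : Fin d → ℝ) : Set ((Fin d → ℝ) × (Fin d → ℝ)) :=
  {p | (∑ i, p.1 i) = 0 ∧ (∑ i, p.1 i * p.1 i) = 1 ∧ (∀ i, 0 ≤ p.2 i)
    ∧ (∑ l, lam l * p.2 l) = 1}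

lemma Pcont (Γ : Matrix (Fin d) (Fin d) ℝ) : Continuous (Pfun lam Γ) := by
  have h : Pfun lam Γ = fun p => (∑ l, p.2 l) / 2
      * ∑ k, lam k * p.2 k * (∑ i, ∑ j, p.1 i * (GammaK lam Γ k i j * p.1 j)) := by
    funext p
    unfold Pfun
    congr 1
    exact Finset.sum_congr rfl fun k _ => by rw [quadExpand]
  rw [h]
  fun_prop

lemma Kcomp (hlam : ∀ i, 0 < lam i) : IsCompact (Kset lam) := by
  refine IsCompact.of_isClosed_subset
    ((isCompact_closedBall (0 : Fin d → ℝ) 1).prod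
      (isCompact_closedBall (0 : Fin d → ℝ) (∑ i, (lam i)⁻¹))) ?_ ?_
  · have h1 : IsClosed {p : (Fin d → ℝ) × (Fin d → ℝ) | (∑ i, p.1 i) = 0} :=
      isClosed_eq (by fun_prop) continuous_const
    have h2 : IsClosed {p : (Fin d → ℝ) × (Fin d → ℝ) | (∑ i, p.1 i * p.1 i) = 1} :=
      isClosed_eq (by fun_prop) continuous_const
    have h3 : IsClosed {p : (Fin d → ℝ) × (Fin d → ℝ) | ∀ i, 0 ≤ p.2 i} := by
      have : {p : (Fin d → ℝ) × (Fin d → ℝ) | ∀ i, 0 ≤ p.2 i}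
          = ⋂ i, {p : (Fin d → ℝ) × (Fin d → ℝ) | 0 ≤ p.2 i} := by
        ext p; simp
      rw [this]
      exact isClosed_iInter fun i => isClosed_le continuous_const (by fun_prop)
    have h4 : IsClosed {p : (Fin d → ℝ) × (Fin d → ℝ) | (∑ l, lam l * p.2 l) = 1} :=
      isClosed_eq (by fun_prop) continuous_const
    have : Kset lam = {p : (Fin d → ℝ) × (Fin d → ℝ) | (∑ i, p.1 i) = 0}
        ∩ ({p | (∑ i, p.1 i * p.1 i) = 1} ∩ ({p | ∀ i, 0 ≤ p.2 i}
          ∩ {p | (∑ l, lam l * p.2 l) = 1})) := by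
      ext p; simp [Kset, and_assoc]
    rw [this]
    exact h1.inter (h2.inter (h3.inter h4))
  · rintro ⟨xx, ρρ⟩ ⟨h1, h2, h3, h4⟩
    constructor
    · simp only [Metric.mem_closedBall, dist_zero_right]
      rw [pi_norm_le_iff_of_nonneg (by norm_num : (0:ℝ) ≤ 1)]
      intro i
      rw [Real.norm_eq_abs]
      refine abs_le_one_iff_mul_self_le_one.mpr ?_
      have := Finset.single_le_sum (f := fun i => xx i * xx i)
        (fun i _ => mul_self_nonneg _) (Finset.mem_univ i)
      rw [h2] at this
      exact this
    · have hR : (0:ℝ) ≤ ∑ i, (lam i)⁻¹ :=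
        Finset.sum_nonneg fun i _ => inv_nonneg.mpr (hlam i).le
      simp only [Metric.mem_closedBall, dist_zero_right]
      rw [pi_norm_le_iff_of_nonneg hR]
      intro i
      rw [Real.norm_eq_abs, abs_of_nonneg (h3 i)]
      have hlr : lam i * ρρ i ≤ 1 := by
        have := Finset.single_le_sum (f := fun l => lam l * ρρ l)
          (fun l _ => mul_nonneg (hlam l).le (h3 l)) (Finset.mem_univ i)
        rw [h4] at this
        exact this
      have h5 : ρρ i ≤ (lam i)⁻¹ := by
        rw [← mul_le_mul_iff_right₀ (hlam i), mul_inv_cancel₀ (hlam i).ne']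
        exact hlr
      refine h5.trans ?_
      exact Finset.single_le_sum (f := fun l => (lam l)⁻¹)
        (fun l _ => inv_nonneg.mpr (hlam l).le) (Finset.mem_univ i)

lemma quadScale (G : Matrix (Fin d) (Fin d) ℝ) (c : ℝ) :
    (c • x) ⬝ᵥ G.mulVec (c • x) = c * c * (x ⬝ᵥ G.mulVec x) := by
  rw [Matrix.mulVec_smul, dotProduct_smul, smul_dotProduct]
  simp only [smul_eq_mul]
  ring

lemma Pfun_def (Γ : Matrix (Fin d) (Fin d) ℝ) (a b : Fin d → ℝ) :
    Pfun lam Γ (a, b) = (∑ l, b l) / 2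
      * ∑ k, lam k * b k * (a ⬝ᵥ (GammaK lam Γ k).mulVec a) := rfl

lemma Knonempty (hd : 2 ≤ d) (hlam : ∀ i, 0 < lam i) : (Kset lam).Nonempty := by
  have h0 : (0 : ℕ) < d := by omega
  have h1 : (1 : ℕ) < d := by omega
  set i0 : Fin d := ⟨0, h0⟩
  set i1 : Fin d := ⟨1, h1⟩
  have hne : i0 ≠ i1 := by simp [i0, i1, Fin.ext_iff]
  set c : ℝ := Real.sqrt 2⁻¹
  have hc2 : c * c = 2⁻¹ := Real.mul_self_sqrt (by norm_num)
  refine ⟨(fun i => c * ((if i = i0 then 1 else 0) - (if i = i1 then 1 else 0)),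
    fun i => if i = i0 then (lam i0)⁻¹ else 0), ?_, ?_, ?_, ?_⟩
  · simp only
    rw [← Finset.mul_sum, Finset.sum_sub_distrib, Finset.sum_ite_eq' Finset.univ i0 (fun _ => (1:ℝ)),
      Finset.sum_ite_eq' Finset.univ i1 (fun _ => (1:ℝ))]
    simp
  · simp only
    have he : ∀ i : Fin d,
        (c * ((if i = i0 then 1 else 0) - (if i = i1 then 1 else 0)))
          * (c * ((if i = i0 then 1 else 0) - (if i = i1 then 1 else 0)))
        = 2⁻¹ * ((if i = i0 then 1 else 0) + (if i = i1 then 1 else 0)) := by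
      intro i
      by_cases e0 : i = i0 <;> by_cases e1 : i = i1 <;>
        simp [e0, e1, hne, Ne.symm hne] <;> nlinarith [hc2]
    rw [Finset.sum_congr rfl fun i _ => he i, ← Finset.mul_sum, Finset.sum_add_distrib,
      Finset.sum_ite_eq' Finset.univ i0 (fun _ => (1:ℝ)),
      Finset.sum_ite_eq' Finset.univ i1 (fun _ => (1:ℝ))]
    simp
    norm_num
  · intro i
    simp only
    by_cases e0 : i = i0
    · rw [if_pos e0]; exact inv_nonneg.mpr (hlam i0).le
    · rw [if_neg e0]
  · simp only
    have he : ∀ i : Fin d, lam i * (if i = i0 then (lam i0)⁻¹ else 0)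
        = (if i = i0 then lam i0 * (lam i0)⁻¹ else 0) := by
      intro i
      by_cases e0 : i = i0
      · simp [e0]
      · simp [e0]
    rw [Finset.sum_congr rfl fun i _ => he i,
      Finset.sum_ite_eq' Finset.univ i0 (fun _ => lam i0 * (lam i0)⁻¹)]
    simp [mul_inv_cancel₀ (hlam i0).ne']

lemma PposK (hlam : ∀ i, 0 < lam i) (Γ : Matrix (Fin d) (Fin d) ℝ) (hΓ : CondC lam Γ)
    (p : (Fin d → ℝ) × (Fin d → ℝ)) (hp : p ∈ Kset lam) : 0 < Pfun lam Γ p := by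
  obtain ⟨h1, h2, h3, h4⟩ := hp
  have hx0 : p.1 ≠ 0 := by
    intro h
    rw [h] at h2
    simp at h2
  have hrhok : ∃ k, 0 < p.2 k := by
    by_contra h
    push_neg at h
    have hz : ∀ k, p.2 k = 0 := fun k => le_antisymm (h k) (h3 k)
    rw [Finset.sum_congr rfl (fun k _ => by rw [hz k, mul_zero])] at h4
    simp at h4
  obtain ⟨k0, hk0⟩ := hrhok
  unfold Pfun
  apply mul_pos
  · exact div_pos (Finset.sum_pos' (fun i _ => h3 i) ⟨k0, Finset.mem_univ _, hk0⟩) two_pos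
  · refine Finset.sum_pos' (fun k _ => ?_) ⟨k0, Finset.mem_univ _, ?_⟩
    · exact mul_nonneg (mul_nonneg (hlam k).le (h3 k))
        (Qpos lam p.1 Γ hΓ h1 hx0 k).le
    · exact mul_pos (mul_pos (hlam k0) hk0) (Qpos lam p.1 Γ hΓ h1 hx0 k0)

theorem stmt2 {d : ℕ} (hd : 2 ≤ d) (lam : Fin d → ℝ) (hlam : ∀ i, 0 < lam i)
    (Γ : Matrix (Fin d) (Fin d) ℝ) (hΓ : CondC lam Γ) :
    ∃ z > (0 : ℝ), ∀ x : Fin d → ℝ, (∑ i, x i) = 0 → ∀ ρ ∈ Dset d,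
      z * (x ⬝ᵥ x) ≤ x ⬝ᵥ (Γ * Amat lam ρ).mulVec x := by
  have hsym : ∀ i j, Γ i j = Γ j i := fun i j => by
    have := congrFun (congrFun hΓ.1.isHermitian i) j
    simpa [Matrix.conjTranspose_apply] using this.symm
  obtain ⟨p, hpK, hpmin⟩ := (Kcomp lam hlam).exists_isMinOn (Knonempty lam hd hlam)
      (Pcont lam Γ).continuousOn
  refine ⟨Pfun lam Γ p, PposK lam hlam Γ hΓ p hpK, ?_⟩
  intro x hx ρ hρ
  obtain ⟨hρpos, hρ0⟩ := hρ
  obtain ⟨k1, hk1⟩ : ∃ k, ρ k ≠ 0 := Function.ne_iff.mp hρ0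
  have hk1' : 0 < ρ k1 := (hρpos k1).lt_of_ne (Ne.symm hk1)
  have hs : 0 < ∑ l, lam l * ρ l :=
    Finset.sum_pos' (fun l _ => mul_nonneg (hlam l).le (hρpos l))
      ⟨k1, Finset.mem_univ _, mul_pos (hlam k1) hk1'⟩
  rw [mainId lam ρ x Γ hsym hs.ne' hx]
  by_cases hx0 : x = 0
  · subst hx0
    simp [dotProduct]
  · set s := ∑ l, lam l * ρ l with hsdef
    set n2 := ∑ i, x i * x i with hn2def
    have hxx : x ⬝ᵥ x = n2 := rfl
    have hn2 : 0 < n2 := by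
      obtain ⟨i, hi⟩ := Function.ne_iff.mp hx0
      exact Finset.sum_pos' (fun i _ => mul_self_nonneg _)
        ⟨i, Finset.mem_univ _, mul_self_pos.mpr hi⟩
    set n := Real.sqrt n2 with hndef
    have hnn : n * n = n2 := Real.mul_self_sqrt hn2.le
    have hnpos : 0 < n := Real.sqrt_pos.mpr hn2
    have hqK : (n⁻¹ • x, s⁻¹ • ρ) ∈ Kset lam := by
      refine ⟨?_, ?_, ?_, ?_⟩
      · simp only [Pi.smul_apply, smul_eq_mul]
        rw [← Finset.mul_sum, hx, mul_zero]
      · simp only [Pi.smul_apply, smul_eq_mul]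
        have e : ∀ i, (n⁻¹ * x i) * (n⁻¹ * x i) = n⁻¹ * n⁻¹ * (x i * x i) :=
          fun i => by ring
        rw [Finset.sum_congr rfl fun i _ => e i, ← Finset.mul_sum, ← hn2def, ← hnn]
        field_simp
      · intro i
        simp only [Pi.smul_apply, smul_eq_mul]
        exact mul_nonneg (inv_nonneg.mpr hs.le) (hρpos i)
      · simp only [Pi.smul_apply, smul_eq_mul]
        have e : ∀ l, lam l * (s⁻¹ * ρ l) = s⁻¹ * (lam l * ρ l) := fun l => by ring
        rw [Finset.sum_congr rfl fun l _ => e l, ← Finset.mul_sum, ← hsdef]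
        exact inv_mul_cancel₀ hs.ne'
    have hzq : Pfun lam Γ p ≤ Pfun lam Γ (n⁻¹ • x, s⁻¹ • ρ) :=
      isMinOn_iff.mp hpmin _ hqK
    have key : Pfun lam Γ (n⁻¹ • x, s⁻¹ • ρ) * n2
        = (∑ l, ρ l) / (2 * s ^ 2)
          * ∑ k, lam k * ρ k * (x ⬝ᵥ (GammaK lam Γ k).mulVec x) := by
      rw [Pfun_def]
      have e1 : ∑ l, (s⁻¹ • ρ) l = s⁻¹ * ∑ l, ρ l := by
        simp only [Pi.smul_apply, smul_eq_mul]
        rw [← Finset.mul_sum]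
      have e2 : ∑ k, lam k * (s⁻¹ • ρ) k
            * ((n⁻¹ • x) ⬝ᵥ (GammaK lam Γ k).mulVec (n⁻¹ • x))
          = s⁻¹ * (n⁻¹ * n⁻¹)
            * ∑ k, lam k * ρ k * (x ⬝ᵥ (GammaK lam Γ k).mulVec x) := by
        rw [Finset.mul_sum]
        refine Finset.sum_congr rfl fun k _ => ?_
        rw [quadScale (x := x) (G := GammaK lam Γ k) (c := n⁻¹)]
        simp only [Pi.smul_apply, smul_eq_mul]
        ring
      rw [e1, e2, ← hnn]
      field_simp
    calc Pfun lam Γ p * (x ⬝ᵥ x) = Pfun lam Γ p * n2 := by rw [hxx]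
      _ ≤ Pfun lam Γ (n⁻¹ • x, s⁻¹ • ρ) * n2 := mul_le_mul_of_nonneg_right hzq hn2.le
      _ = _ := key
end

section
/- If Γ ∈ S_d^{++}(ℝ) satisfies Condition (C), then for ε > 0 small enough the matrix-valued function ρ ↦ (J_d + εΓ) A(ρ) is uniformly coercive on D, i.e., there is c > 0 with ξ^* (J_d + εΓ) A(ρ) ξ ≥ c ξ^*ξ for all ξ ∈ ℝ^d and ρ ∈ D. In particular, Condition (C) holds if and only if there exists Π ∈ S_d^{++}(ℝ) and κ ∈ (0, l_min(Π)/2) such that ξ^* Π A(ρ) ξ ≥ κ ξ^*ξ for all ξ ∈ ℝ^d and ρ ∈ D. -/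
open Matrix Finset

/-- The all-ones matrix `J_d`. -/
def Jmat (d : ℕ) : Matrix (Fin d) (Fin d) ℝ := Matrix.of fun _ _ => 1

/-! ### Auxiliary lemmas -/

lemma dotP_self_nonneg {n : ℕ} (x : Fin n → ℝ) : 0 ≤ x ⬝ᵥ x :=
  Finset.sum_nonneg fun _ _ => mul_self_nonneg _

lemma dotP_self_pos {n : ℕ} {x : Fin n → ℝ} (hx : x ≠ 0) : 0 < x ⬝ᵥ x :=
  lt_of_le_of_ne (dotP_self_nonneg x) (fun h => hx (dotProduct_self_eq_zero.mp h.symm))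

lemma coercive_of_posDef {n : ℕ} (hn : 0 < n) (B : Matrix (Fin n) (Fin n) ℝ) (hB : B.PosDef) :
    ∃ c > (0:ℝ), ∀ x : Fin n → ℝ, c * (x ⬝ᵥ x) ≤ x ⬝ᵥ B *ᵥ x := by
  have hcont : Continuous fun x : Fin n → ℝ => x ⬝ᵥ B *ᵥ x := by
    simp only [dotProduct, mulVec]
    exact continuous_finset_sum _ fun i _ => (continuous_apply i).mul
      (continuous_finset_sum _ fun j _ => (continuous_const.mul (continuous_apply j)))
  set S : Set (Fin n → ℝ) := {x | x ⬝ᵥ x = 1} with hS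
  have hSclosed : IsClosed S := isClosed_eq (by simp only [dotProduct]; fun_prop) continuous_const
  have hSbdd : Bornology.IsBounded S := by
    rw [Metric.isBounded_iff_subset_closedBall 0]
    refine ⟨1, fun x hx => ?_⟩
    simp only [hS, Set.mem_setOf_eq, dotProduct] at hx
    simp only [Metric.mem_closedBall, dist_zero_right]
    rw [pi_norm_le_iff_of_nonneg zero_le_one]
    intro i
    have h := Finset.single_le_sum (f := fun j => x j * x j) (fun j _ => mul_self_nonneg _) (mem_univ i)
    rw [hx] at h
    rw [Real.norm_eq_abs, abs_le]
    constructor <;> nlinarith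
  have hScompact : IsCompact S := Metric.isCompact_of_isClosed_isBounded hSclosed hSbdd
  have hSne : S.Nonempty := by
    refine ⟨Pi.single ⟨0, hn⟩ 1, ?_⟩
    simp [hS, dotProduct, Pi.single_apply]
  obtain ⟨x₀, hx₀S, hx₀min⟩ := hScompact.exists_isMinOn hSne hcont.continuousOn
  have hx₀ne : x₀ ≠ 0 := by
    intro h
    rw [hS] at hx₀S; simp only [Set.mem_setOf_eq, h] at hx₀S
    simp at hx₀S
  refine ⟨x₀ ⬝ᵥ B *ᵥ x₀, by simpa using hB.dotProduct_mulVec_pos hx₀ne, ?_⟩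
  intro x
  rcases eq_or_ne x 0 with rfl | hx
  · simp
  have hxx : 0 < x ⬝ᵥ x := dotP_self_pos hx
  set r : ℝ := Real.sqrt (x ⬝ᵥ x) with hr
  have hrpos : 0 < r := Real.sqrt_pos.mpr hxx
  have hrr : r * r = x ⬝ᵥ x := Real.mul_self_sqrt hxx.le
  have hy : (r⁻¹ • x) ∈ S := by
    simp only [hS, Set.mem_setOf_eq, smul_dotProduct, dotProduct_smul, smul_eq_mul]
    field_simp
    nlinarith
  have hmin := hx₀min hy
  have hexp : (r⁻¹ • x) ⬝ᵥ B *ᵥ (r⁻¹ • x) = r⁻¹ * r⁻¹ * (x ⬝ᵥ B *ᵥ x) := by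
    rw [mulVec_smul, smul_dotProduct, dotProduct_smul]
    simp [mul_assoc]
  simp only [Set.mem_setOf_eq] at hmin
  rw [hexp] at hmin
  calc x₀ ⬝ᵥ B *ᵥ x₀ * (x ⬝ᵥ x) ≤ (r⁻¹ * r⁻¹ * (x ⬝ᵥ B *ᵥ x)) * (x ⬝ᵥ x) :=
        mul_le_mul_of_nonneg_right hmin hxx.le
    _ = x ⬝ᵥ B *ᵥ x := by
        rw [← hrr]
        field_simp

lemma Mmat_apply {d : ℕ} (lam ρ : Fin d → ℝ) (hs : (∑ l, lam l * ρ l) ≠ 0) (i j : Fin d) :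
    Mmat lam ρ i j = (lam i * ρ i / (∑ l, lam l * ρ l)) *
        (((∑ l, lam l * ρ l) - lam j * (∑ l, ρ l)) / (∑ l, lam l * ρ l))
      - (if j = i then ((∑ l, lam l * ρ l) - lam i * (∑ l, ρ l)) / (∑ l, lam l * ρ l) else 0) := by
  set s := ∑ l, lam l * ρ l with hsdef
  set σ := ∑ l, ρ l with hσdef
  have h1 : ∀ m : Fin d, ∑ l ∈ univ.erase m, lam l * ρ l = s - lam m * ρ m :=
    fun m => Finset.sum_erase_eq_sub (mem_univ m)
  have htot : ∀ m : Fin d, ∑ l, (lam l - lam m) * ρ l = s - lam m * σ := by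
    intro m
    simp only [sub_mul, Finset.sum_sub_distrib, ← Finset.mul_sum, hsdef, hσdef]
  have h2 : ∀ m : Fin d, ∑ l ∈ univ.erase m, (lam l - lam m) * ρ l = s - lam m * σ := by
    intro m
    rw [Finset.sum_erase_eq_sub (mem_univ m), htot, sub_self, zero_mul, sub_zero]
  have h3 : ∀ m : Fin d, ∑ l ∈ univ.erase m, (lam m - lam l) * ρ l = lam m * σ - s := by
    intro m
    have : ∀ l, (lam m - lam l) * ρ l = -((lam l - lam m) * ρ l) := fun l => by ring
    simp only [this, Finset.sum_neg_distrib, h2]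
    ring
  show (if i = j then _ else _) = _
  rcases eq_or_ne i j with rfl | hij
  · rw [if_pos rfl, if_pos rfl, h1, h3, ← hsdef]
    field_simp
    ring
  · rw [if_neg hij, if_neg (Ne.symm hij), h2, sub_zero]
    field_simp
    rw [← hsdef]
    field_simp

lemma Amat_mulVec {d : ℕ} (lam ρ : Fin d → ℝ) (hs : (∑ l, lam l * ρ l) ≠ 0) (ξ : Fin d → ℝ) :
    (Amat lam ρ) *ᵥ ξ = fun p => (1/2) * (ξ p +
      ((lam p * ρ p / (∑ l, lam l * ρ l)) *
        (∑ j, (((∑ l, lam l * ρ l) - lam j * (∑ l, ρ l)) / (∑ l, lam l * ρ l)) * ξ j)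
       - (((∑ l, lam l * ρ l) - lam p * (∑ l, ρ l)) / (∑ l, lam l * ρ l)) * ξ p)) := by
  funext p
  rw [Amat, smul_mulVec, add_mulVec, one_mulVec]
  simp only [Pi.smul_apply, Pi.add_apply, smul_eq_mul, mulVec, dotProduct]
  have key : ∀ x : Fin d, Mmat lam ρ p x * ξ x =
      (lam p * ρ p / (∑ l, lam l * ρ l)) *
        ((((∑ l, lam l * ρ l) - lam x * (∑ l, ρ l)) / (∑ l, lam l * ρ l)) * ξ x)
      - (if x = p then (((∑ l, lam l * ρ l) - lam p * (∑ l, ρ l)) / (∑ l, lam l * ρ l)) * ξ x else 0) := by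
    intro x
    rw [Mmat_apply lam ρ hs]
    rcases eq_or_ne x p with rfl | hxp
    · rw [if_pos rfl, if_pos rfl]; ring
    · rw [if_neg hxp, if_neg hxp]; ring
  rw [Finset.sum_congr rfl (fun x _ => key x), Finset.sum_sub_distrib, ← Finset.mul_sum,
    Finset.sum_ite_eq' univ p (fun x => (((∑ l, lam l * ρ l) - lam p * (∑ l, ρ l)) / (∑ l, lam l * ρ l)) * ξ x)]
  simp

/-- The quadratic form `Q_k`. -/
noncomputable def Qform {d : ℕ} (lam : Fin d → ℝ) (Γ : Matrix (Fin d) (Fin d) ℝ)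
    (k : Fin d) (ξ : Fin d → ℝ) : ℝ :=
  (∑ i, ∑ j, Γ i j * lam j * ξ i * ξ j) - (∑ j, Γ k j * ξ j) * (∑ i, lam i * ξ i)

lemma quadform_GA {d : ℕ} (lam ρ : Fin d → ℝ) (Γ : Matrix (Fin d) (Fin d) ℝ)
    (hΓ : Γᵀ = Γ) (hs : (∑ l, lam l * ρ l) ≠ 0) (ξ : Fin d → ℝ) (hξ : ∑ i, ξ i = 0) :
    ξ ⬝ᵥ (Γ * Amat lam ρ) *ᵥ ξ =
      (∑ l, ρ l) / (2 * (∑ l, lam l * ρ l) ^ 2) * ∑ k, lam k * ρ k * Qform lam Γ k ξ := by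
  have hsym : ∀ a b, Γ a b = Γ b a := fun a b => by
    conv_lhs => rw [← hΓ, transpose_apply]
  set s := ∑ l, lam l * ρ l with hsdef
  set σ := ∑ l, ρ l with hσdef
  set g := Γ *ᵥ ξ with hgdef
  have hvm : ξ ᵥ* Γ = g := by
    rw [hgdef]
    conv_lhs => rw [← hΓ]
    rw [vecMul_transpose]
  rw [← mulVec_mulVec, dotProduct_mulVec, hvm, Amat_mulVec lam ρ hs]
  set L := ∑ i, lam i * ξ i with hLdef
  set B := ∑ j, ((s - lam j * σ)/s) * ξ j with hBdef
  have hgk : ∀ k, g k = ∑ j, Γ k j * ξ j := fun k => rfl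
  have hB : B = -(σ/s) * L := by
    rw [hBdef]
    have h1 : ∀ j, ((s - lam j * σ)/s) * ξ j = ξ j - (σ/s)*(lam j * ξ j) := by
      intro j; field_simp
    rw [Finset.sum_congr rfl fun j _ => h1 j, Finset.sum_sub_distrib, hξ, ← Finset.mul_sum,
      ← hLdef]
    ring
  have key : ∀ p, g p * ((1/2) * (ξ p + ((lam p * ρ p / s) * B - ((s - lam p * σ)/s) * ξ p)))
      = (B/(2*s)) * (lam p * ρ p * g p) + (σ/(2*s)) * (lam p * g p * ξ p) := by
    intro p; field_simp; ring
  show (∑ p, g p * _) = _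
  rw [Finset.sum_congr rfl fun p _ => key p, Finset.sum_add_distrib, ← Finset.mul_sum,
    ← Finset.mul_sum]
  set R := ∑ p, lam p * ρ p * g p with hRdef
  set W := ∑ p, lam p * g p * ξ p with hWdef
  have hW : W = ∑ i, ∑ j, Γ i j * lam j * ξ i * ξ j := by
    rw [hWdef]
    calc (∑ p, lam p * g p * ξ p) = ∑ p, ∑ j, Γ j p * lam p * ξ j * ξ p := by
          refine Finset.sum_congr rfl fun p _ => ?_
          rw [hgk p, Finset.mul_sum, Finset.sum_mul]
          refine Finset.sum_congr rfl fun j _ => ?_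
          rw [hsym p j]; ring
      _ = ∑ j, ∑ p, Γ j p * lam p * ξ j * ξ p := Finset.sum_comm
  have hQ : ∀ k, lam k * ρ k * Qform lam Γ k ξ
      = lam k * ρ k * W - L * (lam k * ρ k * g k) := by
    intro k
    rw [Qform, ← hW, ← hgk, ← hLdef]
    ring
  rw [Finset.sum_congr rfl fun k _ => hQ k, Finset.sum_sub_distrib, ← Finset.sum_mul,
    ← Finset.mul_sum, ← hsdef, ← hRdef, hB]
  field_simp
  ring

lemma Qform_delta {d : ℕ} (lam : Fin d → ℝ) (Γ : Matrix (Fin d) (Fin d) ℝ)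
    (hΓ : Γᵀ = Γ) (k : Fin d) (x : Fin d → ℝ) :
    Qform lam Γ k (fun i => x i - (if i = k then (∑ j, x j) else 0))
      = x ⬝ᵥ (GammaK lam Γ k) *ᵥ x := by
  have hsym : ∀ a b, Γ a b = Γ b a := fun a b => by
    conv_lhs => rw [← hΓ, transpose_apply]
  set T := ∑ j, x j with hT
  have hterm : ∀ i j, Γ i j * lam j * (x i - (if i = k then T else 0)) *
        (x j - (if j = k then T else 0)) = Γ i j * lam j * x i * x j
      - (if i = k then T * (Γ k j * lam j * x j) else 0)
      - (if j = k then T * lam k * (Γ i k * x i) else 0)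
      + (if i = k then (if j = k then T^2 * (Γ k k * lam k) else 0) else 0) := by
    intro i j
    by_cases hi : i = k <;> by_cases hj : j = k
    · subst hi; subst hj; simp only [eq_self_iff_true, if_true]; ring
    · subst hi; simp only [eq_self_iff_true, if_true, if_neg hj]; ring
    · subst hj; simp only [eq_self_iff_true, if_true, if_neg hi]; ring
    · simp only [if_neg hi, if_neg hj]; ring
  have hinner : ∀ i, ∑ j, (Γ i j * lam j * (x i - (if i = k then T else 0)) *
        (x j - (if j = k then T else 0)))
      = (∑ j, Γ i j * lam j * x i * x j)
      - (if i = k then T * (∑ j, Γ k j * lam j * x j) else 0)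
      - T * lam k * (Γ i k * x i)
      + (if i = k then T^2 * (Γ k k * lam k) else 0) := by
    intro i
    rw [Finset.sum_congr rfl fun j _ => hterm i j]
    rw [Finset.sum_add_distrib, Finset.sum_sub_distrib, Finset.sum_sub_distrib]
    congr 1
    · congr 1
      · congr 1
        by_cases hi : i = k
        · simp only [if_pos hi, ← Finset.mul_sum]
        · simp only [if_neg hi, Finset.sum_const_zero]
      · rw [Finset.sum_ite_eq' univ k fun j => T * lam k * (Γ i k * x i)]
        simp
    · by_cases hi : i = k
      · simp only [if_pos hi]
        rw [Finset.sum_ite_eq' univ k fun _ => T^2 * (Γ k k * lam k)]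
        simp
      · simp only [if_neg hi, Finset.sum_const_zero]
  have hLHS : Qform lam Γ k (fun i => x i - (if i = k then T else 0))
      = (∑ i, ∑ j, Γ i j * lam j * x i * x j)
        - T * (∑ j, Γ k j * lam j * x j)
        - T * lam k * (∑ i, Γ i k * x i)
        + T^2 * (Γ k k * lam k)
        - ((∑ j, Γ k j * x j) - T * Γ k k) * ((∑ i, lam i * x i) - T * lam k) := by
    rw [Qform]
    have h2 : (∑ j, Γ k j * (x j - (if j = k then T else 0)))
        = (∑ j, Γ k j * x j) - T * Γ k k := by
      have : ∀ j, Γ k j * (x j - (if j = k then T else 0))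
          = Γ k j * x j - (if j = k then T * Γ k k else 0) := by
        intro j
        by_cases hj : j = k
        · subst hj; simp only [eq_self_iff_true, if_true]; ring
        · simp only [if_neg hj]; ring
      rw [Finset.sum_congr rfl fun j _ => this j, Finset.sum_sub_distrib,
        Finset.sum_ite_eq' univ k fun _ => T * Γ k k]
      simp
    have h3 : (∑ i, lam i * (x i - (if i = k then T else 0)))
        = (∑ i, lam i * x i) - T * lam k := by
      have : ∀ i, lam i * (x i - (if i = k then T else 0))
          = lam i * x i - (if i = k then T * lam k else 0) := by
        intro i
        by_cases hi : i = k
        · subst hi; simp only [eq_self_iff_true, if_true]; ring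
        · simp only [if_neg hi]; ring
      rw [Finset.sum_congr rfl fun i _ => this i, Finset.sum_sub_distrib,
        Finset.sum_ite_eq' univ k fun _ => T * lam k]
      simp
    rw [Finset.sum_congr rfl fun i _ => hinner i]
    rw [Finset.sum_add_distrib, Finset.sum_sub_distrib, Finset.sum_sub_distrib]
    rw [Finset.sum_ite_eq' univ k fun _ => T * (∑ j, Γ k j * lam j * x j)]
    rw [Finset.sum_ite_eq' univ k fun _ => T^2 * (Γ k k * lam k)]
    rw [← Finset.mul_sum, h2, h3]
    simp only [mem_univ, if_true, ← Finset.mul_sum]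
  rw [hLHS]
  have hRHS : x ⬝ᵥ (GammaK lam Γ k) *ᵥ x
      = ∑ i, ∑ j, ((lam i + lam j)/2 * (Γ i j + Γ k k - Γ i k - Γ j k)) * (x i * x j) := by
    simp only [dotProduct, mulVec, GammaK, of_apply, Finset.mul_sum]
    exact Finset.sum_congr rfl fun i _ => Finset.sum_congr rfl fun j _ => by ring
  have hexpand : ∀ i j, ((lam i + lam j)/2 * (Γ i j + Γ k k - Γ i k - Γ j k)) * (x i * x j)
      = (1/2) * (Γ i j * lam i * x i * x j) + (1/2) * (Γ i j * lam j * x i * x j)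
      + ((Γ k k/2) * ((lam i * x i) * (x j)) + (Γ k k/2) * ((x i) * (lam j * x j)))
      - ((1/2) * ((Γ i k * lam i * x i) * (x j)) + (1/2) * ((Γ i k * x i) * (lam j * x j)))
      - ((1/2) * ((lam i * x i) * (Γ j k * x j)) + (1/2) * ((x i) * (Γ j k * lam j * x j))) := by
    intro i j; ring
  have hP12 : (∑ i, ∑ j, Γ i j * lam i * x i * x j)
      = ∑ i, ∑ j, Γ i j * lam j * x i * x j := by
    rw [Finset.sum_comm]
    exact Finset.sum_congr rfl fun j _ => Finset.sum_congr rfl fun i _ => by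
      rw [hsym i j]; ring
  have hGk1 : (∑ i, Γ i k * x i) = ∑ j, Γ k j * x j :=
    Finset.sum_congr rfl fun i _ => by rw [hsym i k]
  have hGk2 : (∑ i, Γ i k * lam i * x i) = ∑ j, Γ k j * lam j * x j :=
    Finset.sum_congr rfl fun i _ => by rw [hsym i k]
  rw [hRHS, Finset.sum_congr rfl fun i _ => Finset.sum_congr rfl fun j _ => hexpand i j]
  simp only [Finset.sum_add_distrib, Finset.sum_sub_distrib, ← Finset.mul_sum, ← Finset.sum_mul]
  rw [hP12, hGk1, hGk2, ← hT]
  ring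

lemma Dset_sums_pos {d : ℕ} (lam : Fin d → ℝ) (hlam : ∀ i, 0 < lam i) {ρ : Fin d → ℝ}
    (hρ : ρ ∈ Dset d) : 0 < (∑ l, ρ l) ∧ 0 < (∑ l, lam l * ρ l) := by
  obtain ⟨hnn, hne⟩ := hρ
  obtain ⟨i, hi⟩ := Function.ne_iff.mp hne
  have hipos : 0 < ρ i := lt_of_le_of_ne (hnn i) (Ne.symm (by simpa using hi))
  constructor
  · exact Finset.sum_pos' (fun l _ => hnn l) ⟨i, mem_univ i, hipos⟩
  · exact Finset.sum_pos' (fun l _ => mul_nonneg (hlam l).le (hnn l))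
      ⟨i, mem_univ i, mul_pos (hlam i) hipos⟩

lemma quadform_JA {d : ℕ} (lam ρ : Fin d → ℝ) (hs : (∑ l, lam l * ρ l) ≠ 0)
    (ξ : Fin d → ℝ) :
    ξ ⬝ᵥ ((Jmat d) * Amat lam ρ) *ᵥ ξ = (∑ i, ξ i)^2 / 2 := by
  rw [← mulVec_mulVec, Amat_mulVec lam ρ hs]
  set s := ∑ l, lam l * ρ l with hsdef
  set σ := ∑ l, ρ l with hσdef
  set B := ∑ j, ((s - lam j * σ)/s) * ξ j with hBdef
  have key : ∀ p, (1/2:ℝ) * (ξ p + ((lam p * ρ p / s) * B - ((s - lam p * σ)/s) * ξ p))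
      = (1/2) * ξ p + (B/(2*s)) * (lam p * ρ p) - (1/2) * (((s - lam p * σ)/s) * ξ p) := by
    intro p; field_simp; ring
  have hJ : (Jmat d) *ᵥ (fun p => (1/2:ℝ) * (ξ p + ((lam p * ρ p / s) * B
      - ((s - lam p * σ)/s) * ξ p))) = fun _ => (∑ i, ξ i) / 2 := by
    funext i
    simp only [Jmat, mulVec, dotProduct, of_apply, one_mul]
    rw [Finset.sum_congr rfl fun p _ => key p, Finset.sum_sub_distrib,
      Finset.sum_add_distrib, ← Finset.mul_sum, ← Finset.mul_sum, ← Finset.mul_sum,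
      ← hBdef, ← hsdef]
    field_simp
    ring
  rw [hJ]
  simp only [dotProduct]
  rw [← Finset.sum_mul]
  ring

lemma Amat_abs_le {d : ℕ} (hd : 0 < d) (lam : Fin d → ℝ) (hlam : ∀ i, 0 < lam i) :
    ∃ KA ≥ (1:ℝ), ∀ ρ ∈ Dset d, ∀ i j, |Amat lam ρ i j| ≤ KA := by
  have hne : (univ : Finset (Fin d)).Nonempty := ⟨⟨0, hd⟩, mem_univ _⟩
  set Λmax := univ.sup' hne lam with hΛmax
  set Λmin := univ.inf' hne lam with hΛmin
  have hΛminpos : 0 < Λmin := (Finset.lt_inf'_iff hne).mpr fun i _ => hlam i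
  have hΛmaxpos : 0 < Λmax := lt_of_lt_of_le (hlam ⟨0, hd⟩) (Finset.le_sup' lam (mem_univ _))
  set β : ℝ := 1 + Λmax / Λmin with hβ
  clear_value β
  have hβ1 : 1 ≤ β := by
    have : 0 ≤ Λmax / Λmin := div_nonneg hΛmaxpos.le hΛminpos.le
    linarith
  refine ⟨(1 + 2*β)/2, by linarith, ?_⟩
  intro ρ hρ i j
  obtain ⟨hσpos, hspos⟩ := Dset_sums_pos lam hlam hρ
  set s := ∑ l, lam l * ρ l with hsdef
  set σ := ∑ l, ρ l with hσdef
  have hsσ : Λmin * σ ≤ s := by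
    rw [hsdef, hσdef, Finset.mul_sum]
    exact Finset.sum_le_sum fun l _ => mul_le_mul_of_nonneg_right
      (Finset.inf'_le lam (mem_univ l)) (hρ.1 l)
  have hb : ∀ m, |(s - lam m * σ)/s| ≤ β := by
    intro m
    rw [abs_div, abs_of_pos hspos, div_le_iff₀ hspos]
    have h0 : 0 ≤ lam m * σ := mul_nonneg (hlam m).le hσpos.le
    have h1 : |s - lam m * σ| ≤ s + lam m * σ := by
      rw [abs_le]
      constructor <;> linarith
    have h2 : lam m * σ ≤ Λmax * σ := mul_le_mul_of_nonneg_right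
      (Finset.le_sup' lam (mem_univ m)) hσpos.le
    have h3 : Λmax * σ * Λmin ≤ Λmax * s := by nlinarith
    have h4 : lam m * σ ≤ Λmax / Λmin * s := by
      rw [div_mul_eq_mul_div, le_div_iff₀ hΛminpos]
      nlinarith
    have : β * s = s + (Λmax/Λmin) * s := by rw [hβ]; ring
    rw [this]
    linarith
  have ha : ∀ m, |lam m * ρ m / s| ≤ 1 := by
    intro m
    rw [abs_div, abs_of_pos hspos, div_le_one hspos]
    have hterm : lam m * ρ m ≤ s :=
      Finset.single_le_sum (f := fun l => lam l * ρ l)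
        (fun l _ => mul_nonneg (hlam l).le (hρ.1 l)) (mem_univ m)
    rw [abs_of_nonneg (mul_nonneg (hlam m).le (hρ.1 m))]
    exact hterm
  have hM : |Mmat lam ρ i j| ≤ 2 * β := by
    rw [Mmat_apply lam ρ hspos.ne' i j, ← hsdef, ← hσdef]
    have h1 : |lam i * ρ i / s * ((s - lam j * σ)/s)| ≤ β := by
      rw [abs_mul]
      calc |lam i * ρ i / s| * |(s - lam j * σ)/s| ≤ 1 * β :=
            mul_le_mul (ha i) (hb j) (abs_nonneg _) zero_le_one
        _ = β := one_mul β
    have h2 : |(if j = i then (s - lam i * σ)/s else 0)| ≤ β := by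
      split
      · exact hb i
      · simp; linarith
    calc |lam i * ρ i / s * ((s - lam j * σ)/s) - (if j = i then (s - lam i * σ)/s else 0)|
        ≤ |lam i * ρ i / s * ((s - lam j * σ)/s)| + |(if j = i then (s - lam i * σ)/s else 0)| :=
          abs_sub _ _
      _ ≤ 2 * β := by linarith
  have hA : Amat lam ρ i j = (1/2) * ((if i = j then (1:ℝ) else 0) + Mmat lam ρ i j) := by
    simp [Amat, Matrix.one_apply]
  rw [hA, abs_mul]
  have h6 : |(if i = j then (1:ℝ) else 0) + Mmat lam ρ i j| ≤ 1 + 2*β := by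
    calc |(if i = j then (1:ℝ) else 0) + Mmat lam ρ i j|
        ≤ |(if i = j then (1:ℝ) else 0)| + |Mmat lam ρ i j| := abs_add_le _ _
      _ ≤ 1 + 2*β := by
          have : |(if i = j then (1:ℝ) else 0)| ≤ 1 := by split <;> simp
          linarith
  rw [abs_of_pos (by norm_num : (0:ℝ) < 1/2)]
  linarith

lemma bilin_bound {d : ℕ} (hd : 0 < d) (lam : Fin d → ℝ) (hlam : ∀ i, 0 < lam i)
    (Γ : Matrix (Fin d) (Fin d) ℝ) :
    ∃ C > (0:ℝ), ∀ ρ ∈ Dset d, ∀ u v : Fin d → ℝ,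
      |u ⬝ᵥ (Γ * Amat lam ρ) *ᵥ v| ≤ C/2 * (u ⬝ᵥ u + v ⬝ᵥ v) := by
  obtain ⟨KA, hKA1, hKA⟩ := Amat_abs_le hd lam hlam
  set G : ℝ := (∑ i, ∑ k, |Γ i k|) + 1 with hG
  have hGpos : 0 < G := by
    have : 0 ≤ ∑ i, ∑ k, |Γ i k| :=
      Finset.sum_nonneg fun i _ => Finset.sum_nonneg fun k _ => abs_nonneg _
    rw [hG]; linarith
  have hrow : ∀ i : Fin d, (∑ k, |Γ i k|) ≤ G := by
    intro i
    have : (∑ k, |Γ i k|) ≤ ∑ i, ∑ k, |Γ i k| :=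
      Finset.single_le_sum (f := fun i => ∑ k, |Γ i k|)
        (fun i _ => Finset.sum_nonneg fun k _ => abs_nonneg _) (mem_univ i)
    rw [hG]; linarith
  refine ⟨G * KA * d, by positivity, ?_⟩
  intro ρ hρ u v
  have hentry : ∀ i j, |(Γ * Amat lam ρ) i j| ≤ G * KA := by
    intro i j
    rw [Matrix.mul_apply]
    calc |∑ k, Γ i k * Amat lam ρ k j| ≤ ∑ k, |Γ i k * Amat lam ρ k j| :=
          Finset.abs_sum_le_sum_abs _ _
      _ ≤ ∑ k, |Γ i k| * KA := by
          refine Finset.sum_le_sum fun k _ => ?_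
          rw [abs_mul]
          exact mul_le_mul_of_nonneg_left (hKA ρ hρ k j) (abs_nonneg _)
      _ = (∑ k, |Γ i k|) * KA := by rw [Finset.sum_mul]
      _ ≤ G * KA := mul_le_mul_of_nonneg_right (hrow i) (by linarith)
  have habs : |u ⬝ᵥ (Γ * Amat lam ρ) *ᵥ v| ≤ (G * KA) * ((∑ i, |u i|) * (∑ j, |v j|)) := by
    calc |u ⬝ᵥ (Γ * Amat lam ρ) *ᵥ v| = |∑ i, ∑ j, u i * ((Γ * Amat lam ρ) i j * v j)| := by
          simp only [dotProduct, mulVec, Finset.mul_sum]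
      _ ≤ ∑ i, |∑ j, u i * ((Γ * Amat lam ρ) i j * v j)| := Finset.abs_sum_le_sum_abs _ _
      _ ≤ ∑ i, ∑ j, |u i * ((Γ * Amat lam ρ) i j * v j)| :=
          Finset.sum_le_sum fun i _ => Finset.abs_sum_le_sum_abs _ _
      _ ≤ ∑ i, ∑ j, |u i| * ((G * KA) * |v j|) := by
          refine Finset.sum_le_sum fun i _ => Finset.sum_le_sum fun j _ => ?_
          rw [abs_mul, abs_mul]
          refine mul_le_mul_of_nonneg_left ?_ (abs_nonneg _)
          exact mul_le_mul_of_nonneg_right (hentry i j) (abs_nonneg _)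
      _ = (G * KA) * ((∑ i, |u i|) * (∑ j, |v j|)) := by
          simp only [← Finset.mul_sum, ← Finset.sum_mul]
          ring
  have hu2 : (∑ i, |u i|)^2 ≤ d * (u ⬝ᵥ u) := by
    have := sq_sum_le_card_mul_sum_sq (s := (univ : Finset (Fin d))) (f := fun i => |u i|)
    simpa [dotProduct, sq_abs, sq, Finset.card_univ] using this
  have hv2 : (∑ j, |v j|)^2 ≤ d * (v ⬝ᵥ v) := by
    have := sq_sum_le_card_mul_sum_sq (s := (univ : Finset (Fin d))) (f := fun j => |v j|)
    simpa [dotProduct, sq_abs, sq, Finset.card_univ] using this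
  have hunn : 0 ≤ ∑ i, |u i| := Finset.sum_nonneg fun i _ => abs_nonneg _
  have hvnn : 0 ≤ ∑ j, |v j| := Finset.sum_nonneg fun j _ => abs_nonneg _
  have hprod : (∑ i, |u i|) * (∑ j, |v j|) ≤ (d:ℝ)/2 * (u ⬝ᵥ u + v ⬝ᵥ v) := by
    nlinarith [sq_nonneg ((∑ i, |u i|) - (∑ j, |v j|))]
  calc |u ⬝ᵥ (Γ * Amat lam ρ) *ᵥ v| ≤ (G * KA) * ((∑ i, |u i|) * (∑ j, |v j|)) := habs
    _ ≤ (G * KA) * ((d:ℝ)/2 * (u ⬝ᵥ u + v ⬝ᵥ v)) :=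
        mul_le_mul_of_nonneg_left hprod (by positivity)
    _ = (G * KA * d)/2 * (u ⬝ᵥ u + v ⬝ᵥ v) := by ring

section gk
variable {d : ℕ} (lam : Fin d → ℝ) (Γ : Matrix (Fin d) (Fin d) ℝ) (k : Fin d)

lemma GammaK_col (i : Fin d) : GammaK lam Γ k i k = 0 := by
  simp [GammaK]

lemma GammaK_row (hΓ : Γᵀ = Γ) (j : Fin d) : GammaK lam Γ k k j = 0 := by
  have hsym : Γ k j = Γ j k := by conv_lhs => rw [← hΓ, transpose_apply]
  simp [GammaK, hsym]

lemma GammaK_quadform_eq (hΓ : Γᵀ = Γ) (x : Fin d → ℝ) :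
    x ⬝ᵥ (GammaK lam Γ k) *ᵥ x
      = (fun i => if i = k then 0 else x i) ⬝ᵥ (GammaK lam Γ k) *ᵥ (fun i => if i = k then 0 else x i) := by
  set x' : Fin d → ℝ := fun i => if i = k then 0 else x i with hx'
  have hmv : (GammaK lam Γ k) *ᵥ x = (GammaK lam Γ k) *ᵥ x' := by
    funext i
    simp only [mulVec, dotProduct]
    refine Finset.sum_congr rfl fun j _ => ?_
    by_cases hj : j = k
    · subst hj; rw [GammaK_col]; simp [hx']
    · simp [hx', hj]
  rw [hmv]
  simp only [dotProduct]
  refine Finset.sum_congr rfl fun i _ => ?_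
  by_cases hi : i = k
  · subst hi
    have : ((GammaK lam Γ i) *ᵥ x') i = 0 := by
      simp only [mulVec, dotProduct]
      refine Finset.sum_eq_zero fun j _ => ?_
      rw [GammaK_row lam Γ i hΓ]; ring
    rw [this]; simp [hx']
  · simp [hx', hi]

lemma GammaK_plus_posdef (hC : CondC lam Γ) :
    (GammaK lam Γ k + Matrix.of (fun i j => if i = k ∧ j = k then (1:ℝ) else 0)).PosDef := by
  have hΓ : Γᵀ = Γ := (Matrix.conjTranspose_eq_transpose_of_trivial Γ).symm.trans hC.1.1
  have hsym : ∀ a b, Γ a b = Γ b a := fun a b => by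
    conv_lhs => rw [← hΓ, transpose_apply]
  refine Matrix.PosDef.of_dotProduct_mulVec_pos ?_ ?_
  · show _ᴴ = _
    rw [Matrix.conjTranspose_eq_transpose_of_trivial]
    ext i j
    simp only [transpose_apply, Matrix.add_apply, GammaK, of_apply]
    rw [hsym i j]
    have : (i = k ∧ j = k) ↔ (j = k ∧ i = k) := and_comm
    rw [if_congr this rfl rfl]
    ring
  · intro x hx
    have hstar : star x = x := by
      funext i; simp
    rw [hstar, add_mulVec, dotProduct_add]
    have hij : ∀ i j, (if i = k ∧ j = k then (1:ℝ) else 0) * x j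
        = if j = k then (if i = k then x j else 0) else 0 := by
      intro i j
      by_cases hi : i = k <;> by_cases hj : j = k <;> simp [hi, hj]
    have hE : x ⬝ᵥ (Matrix.of (fun i j => if i = k ∧ j = k then (1:ℝ) else 0)) *ᵥ x
        = x k * x k := by
      simp only [dotProduct, mulVec, of_apply]
      have h1 : ∀ i, (∑ j, (if i = k ∧ j = k then (1:ℝ) else 0) * x j)
          = if i = k then x k else 0 := by
        intro i
        rw [Finset.sum_congr rfl fun j _ => hij i j,
          Finset.sum_ite_eq' univ k (fun j => if i = k then x j else 0)]
        simp
      have h2 : ∀ i, x i * (if i = k then x k else 0) = (if i = k then x k * x k else 0) := by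
        intro i
        by_cases hi : i = k
        · subst hi; simp
        · simp [hi]
      rw [Finset.sum_congr rfl fun i _ => by rw [h1 i, h2 i],
        Finset.sum_ite_eq' univ k (fun _ => x k * x k)]
      simp
    rw [hE]
    set x' : Fin d → ℝ := fun i => if i = k then 0 else x i with hx'
    rw [GammaK_quadform_eq lam Γ k hΓ x]
    by_cases hx'0 : x' = (0 : Fin d → ℝ)
    · have hxk : x k ≠ 0 := by
        intro hk
        apply hx
        funext i
        by_cases hi : i = k
        · subst hi; exact hk
        · have := congrFun hx'0 i
          simpa [hx', hi] using this
      have hzero : x' ⬝ᵥ (GammaK lam Γ k) *ᵥ x' = 0 := by rw [hx'0]; simp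
      rw [hzero]
      have : 0 < x k * x k := mul_self_pos.mpr hxk
      linarith
    · have hpos := hC.2 k x' (by simp [hx']) hx'0
      nlinarith [mul_self_nonneg (x k)]
end gk

lemma Qform_lower {d : ℕ} (hd : 0 < d) (lam : Fin d → ℝ) (Γ : Matrix (Fin d) (Fin d) ℝ)
    (hC : CondC lam Γ) :
    ∃ c1 > (0:ℝ), ∀ k : Fin d, ∀ ξ : Fin d → ℝ, (∑ i, ξ i) = 0 →
      c1 * (ξ ⬝ᵥ ξ) ≤ Qform lam Γ k ξ := by
  have hΓ : Γᵀ = Γ := (Matrix.conjTranspose_eq_transpose_of_trivial Γ).symm.trans hC.1.1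
  have hne : (univ : Finset (Fin d)).Nonempty := ⟨⟨0, hd⟩, mem_univ _⟩
  have hcoer : ∀ k : Fin d, ∃ c > (0:ℝ), ∀ x : Fin d → ℝ,
      c * (x ⬝ᵥ x) ≤ x ⬝ᵥ (GammaK lam Γ k + Matrix.of (fun i j => if i = k ∧ j = k then (1:ℝ) else 0)) *ᵥ x :=
    fun k => coercive_of_posDef hd _ (GammaK_plus_posdef lam Γ k hC)
  choose cfun hcpos hcbound using hcoer
  set c1 : ℝ := (univ.inf' hne cfun) / (d + 1) with hc1
  have hinfpos : 0 < univ.inf' hne cfun := (Finset.lt_inf'_iff hne).mpr fun k _ => hcpos k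
  refine ⟨c1, by positivity, ?_⟩
  intro k ξ hξ
  set x : Fin d → ℝ := fun i => if i = k then 0 else ξ i with hx
  have hsumx : (∑ j, x j) = - ξ k := by
    have : ∀ j, x j = ξ j - (if j = k then ξ j else 0) := by
      intro j
      by_cases hj : j = k
      · subst hj; simp [hx]
      · simp [hx, hj]
    rw [Finset.sum_congr rfl fun j _ => this j, Finset.sum_sub_distrib, hξ,
      Finset.sum_ite_eq' univ k ξ]
    simp
  have hξeq : ξ = fun i => x i - (if i = k then (∑ j, x j) else 0) := by
    funext i
    by_cases hi : i = k
    · subst hi; rw [hsumx]; simp [hx]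
    · simp [hx, hi]
  have hQ : Qform lam Γ k ξ = x ⬝ᵥ (GammaK lam Γ k) *ᵥ x := by
    conv_lhs => rw [hξeq]
    exact Qform_delta lam Γ hΓ k x
  have hxk : x k = 0 := by simp [hx]
  have hEx : x ⬝ᵥ (Matrix.of (fun i j => if i = k ∧ j = k then (1:ℝ) else 0)) *ᵥ x
      = 0 := by
    simp only [dotProduct, mulVec, of_apply]
    refine Finset.sum_eq_zero fun i _ => ?_
    by_cases hi : i = k
    · subst hi; rw [hxk]; ring
    · have : ∀ j, (if i = k ∧ j = k then (1:ℝ) else 0) * x j = 0 := by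
        intro j; simp [hi]
      rw [Finset.sum_congr rfl fun j _ => this j]
      simp
  have hlow : cfun k * (x ⬝ᵥ x) ≤ x ⬝ᵥ (GammaK lam Γ k) *ᵥ x := by
    have := hcbound k x
    rw [add_mulVec, dotProduct_add, hEx] at this
    linarith
  have hxx : x ⬝ᵥ x = ξ ⬝ᵥ ξ - ξ k * ξ k := by
    simp only [dotProduct]
    have : ∀ i, x i * x i = ξ i * ξ i - (if i = k then ξ k * ξ k else 0) := by
      intro i
      by_cases hi : i = k
      · subst hi; simp [hx]
      · simp [hx, hi]
    rw [Finset.sum_congr rfl fun i _ => this i, Finset.sum_sub_distrib,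
      Finset.sum_ite_eq' univ k (fun _ => ξ k * ξ k)]
    simp
  have hξk2 : ξ k * ξ k ≤ d * (x ⬝ᵥ x) := by
    have h1 : (∑ j, x j)^2 ≤ d * ∑ j, x j ^ 2 := by
      have := sq_sum_le_card_mul_sum_sq (s := (univ : Finset (Fin d))) (f := x)
      simpa [Finset.card_univ] using this
    have h2 : (∑ j, x j)^2 = ξ k * ξ k := by rw [hsumx]; ring
    have h3 : (∑ j, x j ^ 2) = x ⬝ᵥ x := by
      simp only [dotProduct, sq]
    rw [h3] at h1
    linarith
  have hxxpos : (ξ ⬝ᵥ ξ) ≤ (d + 1) * (x ⬝ᵥ x) := by linarith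
  have hcle : c1 * (ξ ⬝ᵥ ξ) ≤ cfun k * (x ⬝ᵥ x) := by
    have hinfle : univ.inf' hne cfun ≤ cfun k := Finset.inf'_le cfun (mem_univ k)
    have hxnn : 0 ≤ x ⬝ᵥ x := Finset.sum_nonneg fun i _ => mul_self_nonneg _
    have h4 : c1 * (ξ ⬝ᵥ ξ) ≤ c1 * ((d+1) * (x ⬝ᵥ x)) := by
      apply mul_le_mul_of_nonneg_left hxxpos (by positivity)
    have h5 : c1 * ((d+1) * (x ⬝ᵥ x)) = (univ.inf' hne cfun) * (x ⬝ᵥ x) := by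
      rw [hc1]; field_simp
    have h6 : (univ.inf' hne cfun) * (x ⬝ᵥ x) ≤ cfun k * (x ⬝ᵥ x) :=
      mul_le_mul_of_nonneg_right hinfle hxnn
    linarith
  rw [hQ]
  linarith

lemma GA_lower {d : ℕ} (hd : 0 < d) (lam : Fin d → ℝ) (hlam : ∀ i, 0 < lam i)
    (Γ : Matrix (Fin d) (Fin d) ℝ) (hC : CondC lam Γ) :
    ∃ c2 > (0:ℝ), ∀ ρ ∈ Dset d, ∀ ξ : Fin d → ℝ, (∑ i, ξ i) = 0 →
      c2 * (ξ ⬝ᵥ ξ) ≤ ξ ⬝ᵥ (Γ * Amat lam ρ) *ᵥ ξ := by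
  have hΓ : Γᵀ = Γ := (Matrix.conjTranspose_eq_transpose_of_trivial Γ).symm.trans hC.1.1
  have hne : (univ : Finset (Fin d)).Nonempty := ⟨⟨0, hd⟩, mem_univ _⟩
  obtain ⟨c1, hc1pos, hc1⟩ := Qform_lower hd lam Γ hC
  set Λmax := univ.sup' hne lam with hΛmax
  have hΛmaxpos : 0 < Λmax := lt_of_lt_of_le (hlam ⟨0, hd⟩) (Finset.le_sup' lam (mem_univ _))
  refine ⟨c1 / (2 * Λmax), by positivity, ?_⟩
  intro ρ hρ ξ hξ
  obtain ⟨hσpos, hspos⟩ := Dset_sums_pos lam hlam hρ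
  rw [quadform_GA lam ρ Γ hΓ hspos.ne' ξ hξ]
  set s := ∑ l, lam l * ρ l with hsdef
  set σ := ∑ l, ρ l with hσdef
  have hξξnn : 0 ≤ ξ ⬝ᵥ ξ := Finset.sum_nonneg fun i _ => mul_self_nonneg _
  have hsum_ge : s * (c1 * (ξ ⬝ᵥ ξ)) ≤ ∑ k, lam k * ρ k * Qform lam Γ k ξ := by
    have : ∀ k : Fin d, lam k * ρ k * (c1 * (ξ ⬝ᵥ ξ)) ≤ lam k * ρ k * Qform lam Γ k ξ :=
      fun k => mul_le_mul_of_nonneg_left (hc1 k ξ hξ)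
        (mul_nonneg (hlam k).le (hρ.1 k))
    calc s * (c1 * (ξ ⬝ᵥ ξ)) = ∑ k, lam k * ρ k * (c1 * (ξ ⬝ᵥ ξ)) := by
          rw [← Finset.sum_mul]
      _ ≤ _ := Finset.sum_le_sum fun k _ => this k
  have hsΛ : s ≤ Λmax * σ := by
    rw [hsdef, hσdef, Finset.mul_sum]
    exact Finset.sum_le_sum fun l _ => mul_le_mul_of_nonneg_right
      (Finset.le_sup' lam (mem_univ l)) (hρ.1 l)
  have hfrac : σ / (2 * s ^ 2) * (s * (c1 * (ξ ⬝ᵥ ξ))) = σ / (2 * s) * (c1 * (ξ ⬝ᵥ ξ)) := by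
    field_simp
  have hmono : σ / (2 * s ^ 2) * (s * (c1 * (ξ ⬝ᵥ ξ)))
      ≤ σ / (2 * s ^ 2) * (∑ k, lam k * ρ k * Qform lam Γ k ξ) :=
    mul_le_mul_of_nonneg_left hsum_ge (by positivity)
  have hlast : c1 / (2 * Λmax) * (ξ ⬝ᵥ ξ) ≤ σ / (2 * s) * (c1 * (ξ ⬝ᵥ ξ)) := by
    rw [div_mul_eq_mul_div, div_mul_eq_mul_div, div_le_div_iff₀ (by positivity) (by positivity)]
    have hkey : 2*(c1*(ξ ⬝ᵥ ξ))*s ≤ 2*(c1*(ξ ⬝ᵥ ξ))*(Λmax*σ) :=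
      mul_le_mul_of_nonneg_left hsΛ (by positivity)
    nlinarith [hkey]
  linarith

theorem stmt3 {d : ℕ} (hd : 2 ≤ d) (lam : Fin d → ℝ) (hlam : ∀ i, 0 < lam i) :
    (∀ Γ : Matrix (Fin d) (Fin d) ℝ, CondC lam Γ →
      ∃ ε₀ > (0 : ℝ), ∀ ε : ℝ, 0 < ε → ε ≤ ε₀ →
        ∃ c > (0 : ℝ), ∀ ξ : Fin d → ℝ, ∀ ρ ∈ Dset d,
          c * (ξ ⬝ᵥ ξ) ≤ ξ ⬝ᵥ ((Jmat d + ε • Γ) * Amat lam ρ).mulVec ξ) ∧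
    ((∃ Γ : Matrix (Fin d) (Fin d) ℝ, CondC lam Γ) ↔
      ∃ P : Matrix (Fin d) (Fin d) ℝ, ∃ hP : P.PosDef, ∃ κ : ℝ, 0 < κ ∧
        κ < (Finset.univ.inf' (Finset.univ_nonempty_iff.mpr ⟨⟨0, by omega⟩⟩)
              hP.1.eigenvalues) / 2 ∧
        ∀ ξ : Fin d → ℝ, ∀ ρ ∈ Dset d,
          κ * (ξ ⬝ᵥ ξ) ≤ ξ ⬝ᵥ (P * Amat lam ρ).mulVec ξ) := by
  have hd0 : 0 < d := by omega
  have hdR : (0:ℝ) < d := by exact_mod_cast hd0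
  have partA : ∀ Γ : Matrix (Fin d) (Fin d) ℝ, CondC lam Γ →
      ∃ ε₀ > (0 : ℝ), ∀ ε : ℝ, 0 < ε → ε ≤ ε₀ →
        ∃ c > (0 : ℝ), ∀ ξ : Fin d → ℝ, ∀ ρ ∈ Dset d,
          c * (ξ ⬝ᵥ ξ) ≤ ξ ⬝ᵥ ((Jmat d + ε • Γ) * Amat lam ρ).mulVec ξ := by
    intro Γ hC
    obtain ⟨c2, hc2pos, hc2⟩ := GA_lower hd0 lam hlam Γ hC
    obtain ⟨C, hCpos, hCb⟩ := bilin_bound hd0 lam hlam Γ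
    have hθbound : ∀ θ : ℝ, 0 < θ → ∀ ρ ∈ Dset d, ∀ a b : Fin d → ℝ,
        |a ⬝ᵥ (Γ * Amat lam ρ) *ᵥ b| ≤ C/2 * (θ*(a ⬝ᵥ a) + (b ⬝ᵥ b)/θ) := by
      intro θ hθ ρ hρ a b
      have hsqpos : 0 < Real.sqrt θ := Real.sqrt_pos.mpr hθ
      have hsq : Real.sqrt θ * Real.sqrt θ = θ := Real.mul_self_sqrt hθ.le
      have h := hCb ρ hρ (Real.sqrt θ • a) ((Real.sqrt θ)⁻¹ • b)
      simp only [smul_dotProduct, dotProduct_smul, mulVec_smul, smul_eq_mul] at h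
      have e1 : (Real.sqrt θ)⁻¹ * (Real.sqrt θ * (a ⬝ᵥ (Γ * Amat lam ρ) *ᵥ b))
          = a ⬝ᵥ (Γ * Amat lam ρ) *ᵥ b := by
        field_simp
      have e2 : Real.sqrt θ * (Real.sqrt θ * (a ⬝ᵥ a)) = θ * (a ⬝ᵥ a) := by
        rw [← mul_assoc, hsq]
      have e3 : (Real.sqrt θ)⁻¹ * ((Real.sqrt θ)⁻¹ * (b ⬝ᵥ b)) = (b ⬝ᵥ b)/θ := by
        rw [← mul_assoc, ← mul_inv, hsq, inv_mul_eq_div]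
      rw [e1, e2, e3] at h
      exact h
    set D0 : ℝ := 2*C^2/c2 + C with hD0
    have hD0pos : 0 < D0 := by positivity
    clear_value D0
    refine ⟨(d:ℝ)/(4*D0), by positivity, ?_⟩
    intro ε hεpos hεle
    refine ⟨min ((d:ℝ)/4) (ε*c2/2), lt_min (by positivity) (by positivity), ?_⟩
    intro ξ ρ hρ
    obtain ⟨hσpos, hspos⟩ := Dset_sums_pos lam hlam hρ
    have hsplit : ξ ⬝ᵥ ((Jmat d + ε • Γ) * Amat lam ρ) *ᵥ ξ
        = ξ ⬝ᵥ ((Jmat d) * Amat lam ρ) *ᵥ ξ + ε * (ξ ⬝ᵥ (Γ * Amat lam ρ) *ᵥ ξ) := by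
      rw [Matrix.add_mul, Matrix.smul_mul, add_mulVec, dotProduct_add, smul_mulVec,
        dotProduct_smul, smul_eq_mul]
    show _ ≤ ξ ⬝ᵥ ((Jmat d + ε • Γ) * Amat lam ρ) *ᵥ ξ
    rw [hsplit, quadform_JA lam ρ hspos.ne' ξ]
    set t := ∑ i, ξ i with ht
    set w : Fin d → ℝ := fun i => ξ i - t/d with hw
    set u : Fin d → ℝ := fun _ => t/d with hu
    clear_value t w u
    have hξwu : ξ = w + u := by funext i; simp [hw, hu]
    have hw0 : ∑ i, w i = 0 := by
      rw [hw]
      rw [Finset.sum_sub_distrib, ← ht, Finset.sum_const, card_univ, Fintype.card_fin,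
        nsmul_eq_mul]
      field_simp
      ring
    have hU : u ⬝ᵥ u = t^2/d := by
      simp only [hu, dotProduct]
      rw [Finset.sum_const, card_univ, Fintype.card_fin, nsmul_eq_mul]
      field_simp
    have hW : w ⬝ᵥ w = ξ ⬝ᵥ ξ - t^2/d := by
      simp only [dotProduct, hw]
      have hterm : ∀ i, (ξ i - t/d) * (ξ i - t/d)
          = ξ i * ξ i - (2*t/d) * ξ i + (t/d)*(t/d) := by intro i; ring
      rw [Finset.sum_congr rfl fun i _ => hterm i, Finset.sum_add_distrib,
        Finset.sum_sub_distrib, ← Finset.mul_sum, ← ht, Finset.sum_const, card_univ,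
        Fintype.card_fin, nsmul_eq_mul]
      field_simp
      ring
    have hWnn : 0 ≤ w ⬝ᵥ w := dotP_self_nonneg w
    have hUnn : 0 ≤ u ⬝ᵥ u := dotP_self_nonneg u
    have hQsplit : ξ ⬝ᵥ (Γ * Amat lam ρ) *ᵥ ξ
        = w ⬝ᵥ (Γ * Amat lam ρ) *ᵥ w + w ⬝ᵥ (Γ * Amat lam ρ) *ᵥ u
          + u ⬝ᵥ (Γ * Amat lam ρ) *ᵥ w + u ⬝ᵥ (Γ * Amat lam ρ) *ᵥ u := by
      conv_lhs => rw [hξwu]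
      rw [mulVec_add, dotProduct_add, add_dotProduct, add_dotProduct]
      ring
    have hww := hc2 ρ hρ w hw0
    set θ : ℝ := c2/(2*C) with hθdef
    have hθpos : 0 < θ := by positivity
    clear_value θ
    have h1 := hθbound θ hθpos ρ hρ w u
    have h2 := hθbound θ⁻¹ (by positivity) ρ hρ u w
    have h3 := hCb ρ hρ u u
    have hb1 : C/2*(θ*(w ⬝ᵥ w) + (u ⬝ᵥ u)/θ) = c2/4*(w ⬝ᵥ w) + C^2/c2*(u ⬝ᵥ u) := by
      rw [hθdef]; field_simp; ring
    have hb2 : C/2*(θ⁻¹*(u ⬝ᵥ u) + (w ⬝ᵥ w)/θ⁻¹) = c2/4*(w ⬝ᵥ w) + C^2/c2*(u ⬝ᵥ u) := by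
      rw [hθdef]; field_simp; ring
    rw [hb1] at h1
    rw [hb2] at h2
    have hQlow : c2/2*(w ⬝ᵥ w) - D0*(u ⬝ᵥ u) ≤ ξ ⬝ᵥ (Γ * Amat lam ρ) *ᵥ ξ := by
      rw [hQsplit, hD0]
      have l1 := (abs_le.mp h1).1
      have l2 := (abs_le.mp h2).1
      have l3 := (abs_le.mp h3).1
      have g1 : c2 / 2 * (w ⬝ᵥ w) = c2 * (w ⬝ᵥ w) - 2 * (c2/4*(w ⬝ᵥ w)) := by ring
      have g2 : (2 * C ^ 2 / c2 + C) * (u ⬝ᵥ u)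
          = 2*(C^2/c2*(u ⬝ᵥ u)) + C/2*((u ⬝ᵥ u)+(u ⬝ᵥ u)) := by ring
      linarith
    have hεQ : ε*(c2/2*(w ⬝ᵥ w) - D0*(u ⬝ᵥ u)) ≤ ε * (ξ ⬝ᵥ (Γ * Amat lam ρ) *ᵥ ξ) :=
      mul_le_mul_of_nonneg_left hQlow hεpos.le
    have hX : ξ ⬝ᵥ ξ = w ⬝ᵥ w + u ⬝ᵥ u := by rw [hW, hU]; ring
    have hcWv : min ((d:ℝ)/4) (ε*c2/2) * (w ⬝ᵥ w) ≤ (ε*c2/2)*(w ⬝ᵥ w) :=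
      mul_le_mul_of_nonneg_right (min_le_right _ _) hWnn
    have hcU : min ((d:ℝ)/4) (ε*c2/2) * (u ⬝ᵥ u) ≤ ((d:ℝ)/4)*(u ⬝ᵥ u) :=
      mul_le_mul_of_nonneg_right (min_le_left _ _) hUnn
    have hdU : (d:ℝ) * (u ⬝ᵥ u) = t^2 := by
      rw [hU]; field_simp
    have h5 : ε*(D0*(u ⬝ᵥ u)) ≤ ((d:ℝ)/(4*D0))*(D0*(u ⬝ᵥ u)) :=
      mul_le_mul_of_nonneg_right hεle (by positivity)
    have h6 : ((d:ℝ)/(4*D0))*(D0*(u ⬝ᵥ u)) = ((d:ℝ)*(u ⬝ᵥ u))/4 := by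
      field_simp
    have hexp : ε*(c2/2*(w ⬝ᵥ w) - D0*(u ⬝ᵥ u)) = (ε*c2/2)*(w ⬝ᵥ w) - ε*(D0*(u ⬝ᵥ u)) := by
      ring
    have hcX : min ((d:ℝ)/4) (ε*c2/2) * (ξ ⬝ᵥ ξ)
        = min ((d:ℝ)/4) (ε*c2/2) * (w ⬝ᵥ w) + min ((d:ℝ)/4) (ε*c2/2) * (u ⬝ᵥ u) := by
      rw [hX]; ring
    linarith
  refine ⟨partA, ?_, ?_⟩
  · rintro ⟨Γ, hC⟩
    obtain ⟨ε₀, hε₀pos, hA⟩ := partA Γ hC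
    obtain ⟨c, hcpos, hc⟩ := hA ε₀ hε₀pos le_rfl
    have hΓt : Γᵀ = Γ := (Matrix.conjTranspose_eq_transpose_of_trivial Γ).symm.trans hC.1.1
    have hJpsd : (Jmat d).PosSemidef := by
      refine Matrix.PosSemidef.of_dotProduct_mulVec_nonneg ?_ ?_
      · show _ᴴ = _
        rw [Matrix.conjTranspose_eq_transpose_of_trivial]
        ext i j
        simp [Jmat]
      · intro x
        have hstar : star x = x := by funext i; simp
        have hJv : (Jmat d) *ᵥ x = fun _ => ∑ j, x j := by
          funext i; simp [Jmat, mulVec, dotProduct]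
        rw [hstar, hJv]
        have : x ⬝ᵥ (fun _ => ∑ j, x j) = (∑ j, x j) * (∑ j, x j) := by
          simp only [dotProduct]
          rw [← Finset.sum_mul]
        rw [this]
        exact mul_self_nonneg _
    have hsΓ : (ε₀ • Γ).PosDef := by
      refine Matrix.PosDef.of_dotProduct_mulVec_pos ?_ ?_
      · show _ᴴ = _
        rw [Matrix.conjTranspose_eq_transpose_of_trivial, Matrix.transpose_smul, hΓt]
      · intro x hx
        have hstar : star x = x := by funext i; simp
        rw [hstar, smul_mulVec, dotProduct_smul, smul_eq_mul]
        have h0 : 0 < x ⬝ᵥ Γ *ᵥ x := by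
          have := hC.1.dotProduct_mulVec_pos hx
          rwa [star_trivial] at this
        exact mul_pos hε₀pos h0
    have hP : (Jmat d + ε₀ • Γ).PosDef := Matrix.PosDef.posSemidef_add hJpsd hsΓ
    have hne : (univ : Finset (Fin d)).Nonempty := Finset.univ_nonempty_iff.mpr ⟨⟨0, by omega⟩⟩
    set lmin : ℝ := univ.inf' hne hP.1.eigenvalues with hlmin
    have hlminpos : 0 < lmin := (Finset.lt_inf'_iff hne).mpr fun i _ => hP.eigenvalues_pos i
    refine ⟨Jmat d + ε₀ • Γ, hP, min c (lmin/4), lt_min hcpos (by positivity), ?_, ?_⟩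
    · calc min c (lmin/4) ≤ lmin/4 := min_le_right _ _
        _ < lmin/2 := by linarith
    · intro ξ ρ hρ
      calc min c (lmin/4) * (ξ ⬝ᵥ ξ) ≤ c * (ξ ⬝ᵥ ξ) :=
            mul_le_mul_of_nonneg_right (min_le_left _ _) (dotP_self_nonneg ξ)
        _ ≤ _ := hc ξ ρ hρ
  · rintro ⟨P, hP, κ, hκpos, hκlt, hκ⟩
    refine ⟨P, hP, ?_⟩
    intro k x hxk hxne
    have hPt : Pᵀ = P := (Matrix.conjTranspose_eq_transpose_of_trivial P).symm.trans hP.1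
    set ρk : Fin d → ℝ := fun i => if i = k then 1 else 0 with hρk
    have hρkD : ρk ∈ Dset d := by
      constructor
      · intro i; simp only [hρk]; split <;> norm_num
      · intro h0
        have := congrFun h0 k
        simp [hρk] at this
    have hσ1 : (∑ l, ρk l) = 1 := by
      simp only [hρk]
      rw [Finset.sum_ite_eq' univ k (fun _ => (1:ℝ))]
      simp
    have hs1 : (∑ l, lam l * ρk l) = lam k := by
      have : ∀ l, lam l * ρk l = if l = k then lam l else 0 := by
        intro l; simp only [hρk]; split <;> ring
      rw [Finset.sum_congr rfl fun l _ => this l, Finset.sum_ite_eq' univ k lam]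
      simp
    set ξ : Fin d → ℝ := fun i => x i - (if i = k then (∑ j, x j) else 0) with hξdef
    have hξsum : ∑ i, ξ i = 0 := by
      rw [hξdef]
      rw [Finset.sum_sub_distrib, Finset.sum_ite_eq' univ k (fun _ => ∑ j, x j)]
      simp
    have hQ : Qform lam P k ξ = x ⬝ᵥ (GammaK lam P k) *ᵥ x := by
      rw [hξdef]
      exact Qform_delta lam P hPt k x
    have hsne : (∑ l, lam l * ρk l) ≠ 0 := by rw [hs1]; exact (hlam k).ne'
    have hGA := quadform_GA lam ρk P hPt hsne ξ hξsum
    rw [hσ1, hs1] at hGA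
    have hsum1 : (∑ m, lam m * ρk m * Qform lam P m ξ) = lam k * Qform lam P k ξ := by
      have : ∀ m, lam m * ρk m * Qform lam P m ξ
          = if m = k then lam m * Qform lam P m ξ else 0 := by
        intro m; simp only [hρk]; split <;> ring
      rw [Finset.sum_congr rfl fun m _ => this m,
        Finset.sum_ite_eq' univ k (fun m => lam m * Qform lam P m ξ)]
      simp
    rw [hsum1] at hGA
    have hκle := hκ ξ ρk hρkD
    have hξne : ξ ≠ 0 := by
      obtain ⟨i, hi⟩ := Function.ne_iff.mp hxne
      have hik : i ≠ k := by
        intro h; subst h; exact hi (by simpa using hxk)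
      intro h0
      have := congrFun h0 i
      simp only [hξdef, Pi.zero_apply, if_neg hik, sub_zero] at this
      exact hi (by simpa using this)
    have hξpos : 0 < ξ ⬝ᵥ ξ := dotP_self_pos hξne
    rw [← hQ]
    rw [hGA] at hκle
    have hlk := hlam k
    have hmul := mul_le_mul_of_nonneg_left hκle (le_of_lt (by positivity : (0:ℝ) < 2 * lam k ^ 2))
    have heq : 2 * lam k ^ 2 * (1 / (2 * lam k ^ 2) * (lam k * Qform lam P k ξ))
        = lam k * Qform lam P k ξ := by
      field_simp
    rw [heq] at hmul
    have hposl : 0 < 2 * lam k ^ 2 * (κ * (ξ ⬝ᵥ ξ)) := by positivity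
    have hlq : 0 < lam k * Qform lam P k ξ := lt_of_lt_of_le hposl hmul
    nlinarith [hlq, hlk]
end

section
/- Let γ ≥ 0, T > 0, and let φ : (0,T] → [0,∞) be a measurable function such that for all t ∈ (0,T], ∫_t^T φ(s)^2 ds ≤ γ/√t. Then for every t ∈ (0,T], ∫_0^t φ(s) ds ≤ √γ · t^{1/4} / (2^{1/4} − 1). -/
open MeasureTheory

lemma cs_piece (φ : ℝ → ℝ) (hmeas : Measurable φ) (A : Set ℝ) :
    ∫⁻ s in A, ENNReal.ofReal (φ s) ≤
      (∫⁻ s in A, ENNReal.ofReal (φ s ^ 2)) ^ ((1:ℝ)/2) * (volume A) ^ ((1:ℝ)/2) := by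
  have hconj : Real.HolderConjugate 2 2 := by constructor <;> norm_num
  have h := ENNReal.lintegral_mul_le_Lp_mul_Lq (volume.restrict A) hconj
    (f := fun s => ENNReal.ofReal (φ s)) (g := fun _ => 1)
    (hmeas.ennreal_ofReal.aemeasurable) aemeasurable_const
  simp only [mul_one, ENNReal.one_rpow, lintegral_const, Measure.restrict_apply,
    Set.univ_inter, one_mul, Pi.mul_apply, Pi.one_apply,
    MeasurableSet.univ, Measure.restrict_apply_univ] at h
  refine h.trans ?_
  gcongr with x
  rcases le_or_gt 0 (φ x) with h0 | h0
  · exact le_of_eq (by rw [ENNReal.ofReal_rpow_of_nonneg h0 (by norm_num : (0:ℝ) ≤ 2),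
      Real.rpow_two, sq])
  · simp [ENNReal.ofReal_eq_zero.2 h0.le]

lemma union_dec (t : ℝ) (ht : 0 < t) :
    Set.Ioc (0:ℝ) t = ⋃ n : ℕ, Set.Ioc (t/2^(n+1)) (t/2^n) := by
  ext x
  simp only [Set.mem_Ioc, Set.mem_iUnion]
  constructor
  · rintro ⟨hx0, hxt⟩
    have hex : ∃ n : ℕ, t/2^(n+1) < x := by
      obtain ⟨n, hn⟩ := pow_unbounded_of_one_lt (t/x) one_lt_two
      refine ⟨n, ?_⟩
      rw [div_lt_iff₀ (by positivity)] at hn ⊢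
      calc t < 2^n * x := hn
        _ = x * 2^n := mul_comm _ _
        _ ≤ x * 2^(n+1) := by
            have : (2:ℝ)^n ≤ 2^(n+1) := pow_le_pow_right₀ (by norm_num) (by omega)
            nlinarith
    classical
    refine ⟨Nat.find hex, Nat.find_spec hex, ?_⟩
    rcases Nat.eq_zero_or_pos (Nat.find hex) with h0 | h0
    · rw [h0]; simpa using hxt
    · obtain ⟨m, hm⟩ := Nat.exists_eq_succ_of_ne_zero h0.ne'
      have := Nat.find_min hex (m := m) (by omega)
      rw [hm]
      exact le_of_not_gt this
  · rintro ⟨n, h1, h2⟩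
    refine ⟨lt_trans (by positivity) h1, h2.trans ?_⟩
    exact div_le_self ht.le (one_le_pow₀ (by norm_num))

set_option maxHeartbeats 1000000 in
theorem stmt8 (γ T : ℝ) (hγ : 0 ≤ γ) (hT : 0 < T) (φ : ℝ → ℝ)
    (hmeas : Measurable φ) (hpos : ∀ s ∈ Set.Ioc (0 : ℝ) T, 0 ≤ φ s)
    (hbound : ∀ t ∈ Set.Ioc (0 : ℝ) T,
      ∫⁻ s in Set.Ioc t T, ENNReal.ofReal (φ s ^ 2) ≤
        ENNReal.ofReal (γ / Real.sqrt t)) :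
    ∀ t ∈ Set.Ioc (0 : ℝ) T,
      ∫⁻ s in Set.Ioc (0 : ℝ) t, ENNReal.ofReal (φ s) ≤
        ENNReal.ofReal (Real.sqrt γ * t ^ ((1 : ℝ) / 4) / (2 ^ ((1 : ℝ) / 4) - 1)) := by
  rintro t ⟨ht0, htT⟩
  set s : ℝ := (2:ℝ) ^ ((1:ℝ)/4) with hs_def
  have hs1 : 1 < s := by
    rw [hs_def]
    rw [Real.one_lt_rpow_iff_of_pos (by norm_num)]
    left; constructor <;> norm_num
  have hs0 : 0 < s := lt_trans one_pos hs1
  set c : ℝ := Real.sqrt γ * t ^ ((1:ℝ)/4) with hc_def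
  have hc0 : 0 ≤ c := by
    apply mul_nonneg (Real.sqrt_nonneg _)
    exact Real.rpow_nonneg ht0.le _
  -- per-piece bound
  have hpiece : ∀ n : ℕ, ∫⁻ x in Set.Ioc (t/2^(n+1)) (t/2^n), ENNReal.ofReal (φ x) ≤
      ENNReal.ofReal (c * s⁻¹ ^ (n+1)) := by
    intro n
    have hb0 : (0:ℝ) < t/2^(n+1) := by positivity
    have hbT : t/2^(n+1) ≤ T :=
      le_trans (div_le_self ht0.le (one_le_pow₀ (by norm_num))) htT
    have h1 : ∫⁻ x in Set.Ioc (t/2^(n+1)) (t/2^n), ENNReal.ofReal (φ x ^ 2) ≤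
        ENNReal.ofReal (γ / Real.sqrt (t/2^(n+1))) := by
      refine le_trans (lintegral_mono_set ?_) (hbound _ ⟨hb0, hbT⟩)
      exact Set.Ioc_subset_Ioc le_rfl
        (le_trans (div_le_self ht0.le (one_le_pow₀ (by norm_num))) htT)
    have hvol : volume (Set.Ioc (t/2^(n+1)) (t/2^n)) = ENNReal.ofReal (t/2^(n+1)) := by
      rw [Real.volume_Ioc]
      congr 1
      field_simp
      ring
    refine le_trans (cs_piece φ hmeas _) ?_
    calc (∫⁻ x in Set.Ioc (t/2^(n+1)) (t/2^n), ENNReal.ofReal (φ x ^ 2)) ^ ((1:ℝ)/2) *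
          (volume (Set.Ioc (t/2^(n+1)) (t/2^n))) ^ ((1:ℝ)/2)
        ≤ (ENNReal.ofReal (γ / Real.sqrt (t/2^(n+1)))) ^ ((1:ℝ)/2) *
          (ENNReal.ofReal (t/2^(n+1))) ^ ((1:ℝ)/2) := by
          rw [hvol]
          gcongr
      _ = ENNReal.ofReal ((γ / Real.sqrt (t/2^(n+1))) ^ ((1:ℝ)/2) *
            (t/2^(n+1)) ^ ((1:ℝ)/2)) := by
          rw [ENNReal.ofReal_rpow_of_nonneg (by positivity) (by norm_num),
            ENNReal.ofReal_rpow_of_nonneg (by positivity) (by norm_num),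
            ENNReal.ofReal_mul (by positivity)]
      _ = ENNReal.ofReal (c * s⁻¹ ^ (n+1)) := by
          congr 1
          have hb : (0:ℝ) < t/2^(n+1) := hb0
          set b : ℝ := t/2^(n+1) with hb_def
          have key : (γ / Real.sqrt b) ^ ((1:ℝ)/2) * b ^ ((1:ℝ)/2) =
              Real.sqrt γ * b ^ ((1:ℝ)/4) := by
            rw [Real.sqrt_eq_rpow, Real.sqrt_eq_rpow,
              Real.div_rpow hγ (Real.rpow_nonneg hb.le _),
              ← Real.rpow_mul hb.le]
            have he : ((1:ℝ)/2) * ((1:ℝ)/2) = 1/4 := by norm_num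
            rw [he, div_mul_eq_mul_div, mul_div_assoc, ← Real.rpow_sub hb]
            norm_num
          rw [key, hc_def]
          have hpow : ((2:ℝ)^(n+1)) ^ ((1:ℝ)/4) = ((2:ℝ)^((1:ℝ)/4))^(n+1) := by
            rw [← Real.rpow_natCast (2:ℝ) (n+1), ← Real.rpow_mul (by norm_num), mul_comm,
              Real.rpow_mul (by norm_num), Real.rpow_natCast]
          have hb4 : b ^ ((1:ℝ)/4) = t ^ ((1:ℝ)/4) * s⁻¹ ^ (n+1) := by
            rw [hb_def, Real.div_rpow ht0.le (by positivity), hpow, div_eq_mul_inv,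
              ← inv_pow, hs_def]
          rw [hb4]; ring
  -- assemble
  have hdisj : Pairwise (Function.onFun Disjoint
      (fun n : ℕ => Set.Ioc (t/2^(n+1)) (t/2^n))) := by
    intro m n hmn
    rw [Function.onFun, Set.Ioc_disjoint_Ioc]
    rcases lt_or_gt_of_ne hmn with h | h
    · refine le_trans (min_le_right _ _) (le_trans ?_ (le_max_left _ _))
      exact div_le_div_of_nonneg_left ht0.le (by positivity)
        (pow_le_pow_right₀ (by norm_num) (by omega))
    · refine le_trans (min_le_left _ _) (le_trans ?_ (le_max_right _ _))
      exact div_le_div_of_nonneg_left ht0.le (by positivity)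
        (pow_le_pow_right₀ (by norm_num) (by omega))
  rw [union_dec t ht0, lintegral_iUnion (fun n => measurableSet_Ioc) hdisj]
  have hsum : ∑' n : ℕ, ENNReal.ofReal (c * s⁻¹ ^ (n+1)) =
      ENNReal.ofReal (c / (s - 1)) := by
    have hr0 : (0:ℝ) ≤ s⁻¹ := by positivity
    have hr1 : s⁻¹ < 1 := inv_lt_one_of_one_lt₀ hs1
    have hsummable : Summable (fun n : ℕ => c * s⁻¹ ^ (n+1)) := by
      simp_rw [pow_succ', ← mul_assoc]
      exact ((summable_geometric_of_lt_one hr0 hr1).mul_left _)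
    rw [← ENNReal.ofReal_tsum_of_nonneg (fun n => by positivity) hsummable]
    congr 1
    have : ∑' n : ℕ, c * s⁻¹ ^ (n+1) = c * s⁻¹ * (1 - s⁻¹)⁻¹ := by
      simp_rw [pow_succ', ← mul_assoc]
      rw [tsum_mul_left, tsum_geometric_of_lt_one hr0 hr1]
    rw [this]
    have h1 : (1:ℝ) - s⁻¹ ≠ 0 := by
      have : s⁻¹ < 1 := hr1
      linarith
    field_simp
  calc ∑' n : ℕ, ∫⁻ x in Set.Ioc (t/2^(n+1)) (t/2^n), ENNReal.ofReal (φ x)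
      ≤ ∑' n : ℕ, ENNReal.ofReal (c * s⁻¹ ^ (n+1)) := ENNReal.tsum_le_tsum hpiece
    _ = ENNReal.ofReal (c / (s - 1)) := hsum
end

section
/- Let r_1, r_2, r_3 > 2. The inequality 1/sqrt((r_1−2)(r_2−2)) + 1/sqrt((r_2−2)(r_3−2)) + 1/sqrt((r_1−2)(r_3−2)) > 1/4 holds if and only if either sqrt((r_1−2)(r_2−2)) ≤ 4, or sqrt((r_1−2)(r_2−2)) > 4 and r_3 < 16 ((sqrt(r_1−2)+sqrt(r_2−2))/(sqrt((r_1−2)(r_2−2))−4))^2 + 2. -/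
theorem stmt15 (r1 r2 r3 : ℝ) (h1 : 2 < r1) (h2 : 2 < r2) (h3 : 2 < r3) :
    (1 / Real.sqrt ((r1 - 2) * (r2 - 2)) + 1 / Real.sqrt ((r2 - 2) * (r3 - 2)) +
        1 / Real.sqrt ((r1 - 2) * (r3 - 2)) > 1 / 4) ↔
      (Real.sqrt ((r1 - 2) * (r2 - 2)) ≤ 4 ∨
        (Real.sqrt ((r1 - 2) * (r2 - 2)) > 4 ∧
          r3 < 16 * ((Real.sqrt (r1 - 2) + Real.sqrt (r2 - 2)) /
              (Real.sqrt ((r1 - 2) * (r2 - 2)) - 4)) ^ 2 + 2)) := by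
  have h1' : (0:ℝ) < r1 - 2 := by linarith
  have h2' : (0:ℝ) < r2 - 2 := by linarith
  have h3' : (0:ℝ) < r3 - 2 := by linarith
  rw [Real.sqrt_mul h1'.le, Real.sqrt_mul h2'.le, Real.sqrt_mul h1'.le]
  set a := Real.sqrt (r1 - 2) with hA
  set b := Real.sqrt (r2 - 2) with hB
  set c := Real.sqrt (r3 - 2) with hC
  have ha : 0 < a := Real.sqrt_pos.mpr h1'
  have hb : 0 < b := Real.sqrt_pos.mpr h2'
  have hc : 0 < c := Real.sqrt_pos.mpr h3'
  have hc2 : c ^ 2 = r3 - 2 := Real.sq_sqrt h3'.le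
  have hsum : 1 / (a * b) + 1 / (b * c) + 1 / (a * c)
      = (a + b + c) / (a * b * c) := by
    field_simp; ring
  rw [hsum]
  constructor
  · intro h
    rcases le_or_gt (a * b) 4 with hab | hab
    · exact Or.inl hab
    · refine Or.inr ⟨hab, ?_⟩
      have hd : 0 < a * b - 4 := by linarith
      have h4 : a * b * c < 4 * (a + b + c) := by
        rw [gt_iff_lt, div_lt_div_iff₀ (by norm_num) (by positivity)] at h
        nlinarith [h]
      have key : c * (a * b - 4) < 4 * (a + b) := by nlinarith
      have e : 16 * ((a + b) / (a * b - 4)) ^ 2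
          = 16 * (a + b) ^ 2 / (a * b - 4) ^ 2 := by rw [div_pow]; ring
      rw [e]
      have : r3 - 2 < 16 * (a + b) ^ 2 / (a * b - 4) ^ 2 := by
        rw [lt_div_iff₀ (by positivity), ← hc2]
        nlinarith [mul_pos hc hd, key]
      linarith
  · rintro (hab | ⟨hab, hr3⟩)
    · have hpos : 0 < a * b := mul_pos ha hb
      have h14 : 1 / 4 ≤ 1 / (a * b) := one_div_le_one_div_of_le hpos hab
      have hbc : 0 < 1 / (b * c) := by positivity
      have hac : 0 < 1 / (a * c) := by positivity
      rw [← hsum]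
      linarith
    · have hd : 0 < a * b - 4 := by linarith
      have e : 16 * ((a + b) / (a * b - 4)) ^ 2
          = 16 * (a + b) ^ 2 / (a * b - 4) ^ 2 := by rw [div_pow]; ring
      rw [e] at hr3
      have hsq : c ^ 2 * (a * b - 4) ^ 2 < 16 * (a + b) ^ 2 := by
        have : r3 - 2 < 16 * (a + b) ^ 2 / (a * b - 4) ^ 2 := by linarith
        rw [lt_div_iff₀ (by positivity)] at this
        nlinarith [this, hc2]
      have key : c * (a * b - 4) < 4 * (a + b) := by
        by_contra hcon
        push_neg at hcon
        nlinarith [mul_le_mul hcon hcon (by positivity) (by positivity)]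
      rw [gt_iff_lt, div_lt_div_iff₀ (by norm_num) (by positivity)]
      nlinarith
end

section
/- Let r_1, r_2, r_3 > 2 with r_1 ≤ r_2 ≤ r_3. If sqrt((r_1−2)(r_2−2)) > 4, then (r_1−2)/(r_1+2) + (r_2−2)/(r_2+2) > 1. Consequently, if (r_3−2)/(r_3+2) ≥ (r_1−2)/(r_1+2) + (r_2−2)/(r_2+2), then sqrt((r_1−2)(r_2−2)) ≤ 4, and hence 1/sqrt((r_1−2)(r_2−2)) + 1/sqrt((r_2−2)(r_3−2)) + 1/sqrt((r_1−2)(r_3−2)) > 1/4. -/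
theorem stmt16 (r1 r2 r3 : ℝ) (h1 : 2 < r1) (h12 : r1 ≤ r2) (h23 : r2 ≤ r3) :
    (Real.sqrt ((r1 - 2) * (r2 - 2)) > 4 →
      (r1 - 2) / (r1 + 2) + (r2 - 2) / (r2 + 2) > 1) ∧
    ((r3 - 2) / (r3 + 2) ≥ (r1 - 2) / (r1 + 2) + (r2 - 2) / (r2 + 2) →
      Real.sqrt ((r1 - 2) * (r2 - 2)) ≤ 4 ∧
      1 / Real.sqrt ((r1 - 2) * (r2 - 2)) + 1 / Real.sqrt ((r2 - 2) * (r3 - 2)) +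
        1 / Real.sqrt ((r1 - 2) * (r3 - 2)) > 1 / 4) := by
  have h2 : 2 < r2 := lt_of_lt_of_le h1 h12
  have h3 : 2 < r3 := lt_of_lt_of_le h2 h23
  have p1 : (0:ℝ) < r1 - 2 := by linarith
  have p2 : (0:ℝ) < r2 - 2 := by linarith
  have p3 : (0:ℝ) < r3 - 2 := by linarith
  have q1 : (0:ℝ) < r1 + 2 := by linarith
  have q2 : (0:ℝ) < r2 + 2 := by linarith
  have q3 : (0:ℝ) < r3 + 2 := by linarith
  have part1 : Real.sqrt ((r1 - 2) * (r2 - 2)) > 4 →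
      (r1 - 2) / (r1 + 2) + (r2 - 2) / (r2 + 2) > 1 := by
    intro h
    have h16 : 16 < (r1 - 2) * (r2 - 2) := by
      have := (Real.lt_sqrt (by norm_num : (0:ℝ) ≤ 4)).mp h
      nlinarith [this]
    rw [gt_iff_lt, div_add_div _ _ (ne_of_gt q1) (ne_of_gt q2), lt_div_iff₀ (by positivity)]
    nlinarith
  refine ⟨part1, fun h => ?_⟩
  have hlt1 : (r3 - 2) / (r3 + 2) < 1 := by
    rw [div_lt_one q3]; linarith
  have hsum : (r1 - 2) / (r1 + 2) + (r2 - 2) / (r2 + 2) < 1 := lt_of_le_of_lt h hlt1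
  have hsqrt : Real.sqrt ((r1 - 2) * (r2 - 2)) ≤ 4 := by
    by_contra hc
    exact absurd (part1 (lt_of_not_ge hc)) (not_lt.mpr hsum.le)
  refine ⟨hsqrt, ?_⟩
  have s12 : 0 < Real.sqrt ((r1 - 2) * (r2 - 2)) := Real.sqrt_pos.mpr (by positivity)
  have s23 : 0 < Real.sqrt ((r2 - 2) * (r3 - 2)) := Real.sqrt_pos.mpr (by positivity)
  have s13 : 0 < Real.sqrt ((r1 - 2) * (r3 - 2)) := Real.sqrt_pos.mpr (by positivity)
  have h14 : 1 / 4 ≤ 1 / Real.sqrt ((r1 - 2) * (r2 - 2)) :=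
    one_div_le_one_div_of_le s12 hsqrt
  have t23 : 0 < 1 / Real.sqrt ((r2 - 2) * (r3 - 2)) := by positivity
  have t13 : 0 < 1 / Real.sqrt ((r1 - 2) * (r3 - 2)) := by positivity
  linarith
end
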